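/- arXiv:1412.0310 — 9 statements merged into one kernel-verified Lean document; each statement's English description precedes it below -/
import Mathlib

section
/- Let p, q ≥ 2 be integers, a, b ∈ ℂ ∖ {0}, and let c₁₀, c₂₀ ∈ ℂ ∖ {0} satisfy c₁₀^p = a·conj(c₁₀) and c₂₀^q = b·conj(c₂₀). Set μ = (a·conj(c₁₀))/(b·conj(c₂₀)). Then for every t ∈ ℝ and all u, v ∈ ℂ one has (c₁₀·t^q·u)^p + (c₂₀·t^p·v)^q + a·t^{(p−1)q}·conj(c₁₀·t^q·u) + b·t^{p(q−1)}·conj(c₂₀·t^p·v) = b·conj(c₂₀)·t^{pq}·(μ·(u^p + conj(u)) + v^q + conj(v)). In other words, the linear deformation f_t(z,w) = z^p + w^q + a·t^{(p−1)q}·conj(z) + b·t^{p(q−1)}·conj(w) becomes, after the coordinate change z = c₁₀t^q u, w = c₂₀t^p v, the map P(u,v;μ) multiplied by the constant b·conj(c₂₀)·t^{pq}, where μ does not depend on t. -/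
/-- The linear deformation `f_t(z,w) = z^p + w^q + a t^{(p-1)q} z̄ + b t^{p(q-1)} w̄`
becomes, after the coordinate change `z = c₁₀ t^q u`, `w = c₂₀ t^p v`, the map
`P(u,v;μ) = μ(u^p + ū) + v^q + v̄` multiplied by the constant `b c̄₂₀ t^{pq}`. -/
theorem linear_deformation_coordinate_change
    (p q : ℕ) (hp : 2 ≤ p) (hq : 2 ≤ q)
    (a b c₁₀ c₂₀ μ : ℂ) (ha : a ≠ 0) (hb : b ≠ 0) (hc₁ : c₁₀ ≠ 0) (hc₂ : c₂₀ ≠ 0)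
    (h1 : c₁₀ ^ p = a * (starRingEnd ℂ) c₁₀)
    (h2 : c₂₀ ^ q = b * (starRingEnd ℂ) c₂₀)
    (hμ : μ = a * (starRingEnd ℂ) c₁₀ / (b * (starRingEnd ℂ) c₂₀)) :
    ∀ (t : ℝ) (u v : ℂ),
      (c₁₀ * (t : ℂ) ^ q * u) ^ p + (c₂₀ * (t : ℂ) ^ p * v) ^ q
        + a * (t : ℂ) ^ ((p - 1) * q) * (starRingEnd ℂ) (c₁₀ * (t : ℂ) ^ q * u)
        + b * (t : ℂ) ^ (p * (q - 1)) * (starRingEnd ℂ) (c₂₀ * (t : ℂ) ^ p * v)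
      = b * (starRingEnd ℂ) c₂₀ * (t : ℂ) ^ (p * q)
        * (μ * (u ^ p + (starRingEnd ℂ) u) + v ^ q + (starRingEnd ℂ) v) := by
  intro t u v
  have hbc : b * (starRingEnd ℂ) c₂₀ ≠ 0 :=
    mul_ne_zero hb (by simpa using hc₂)
  have hμ' : μ * (b * (starRingEnd ℂ) c₂₀) = a * (starRingEnd ℂ) c₁₀ := by
    rw [hμ, div_mul_cancel₀ _ hbc]
  have e1 : (p - 1) * q + q = p * q := by
    obtain ⟨p', rfl⟩ : ∃ p', p = p' + 1 := ⟨p - 1, by omega⟩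
    simp [Nat.add_mul]
  have e2 : p * (q - 1) + p = p * q := by
    obtain ⟨q', rfl⟩ : ∃ q', q = q' + 1 := ⟨q - 1, by omega⟩
    simp [Nat.mul_add]
  have t1 : (t : ℂ) ^ ((p - 1) * q) * (t : ℂ) ^ q = (t : ℂ) ^ (p * q) := by
    rw [← pow_add, e1]
  have t2 : (t : ℂ) ^ (p * (q - 1)) * (t : ℂ) ^ p = (t : ℂ) ^ (p * q) := by
    rw [← pow_add, e2]
  simp only [map_mul, map_pow, Complex.conj_ofReal, mul_pow]
  linear_combination ((t : ℂ) ^ (p * q) * u ^ p) * h1 + ((t : ℂ) ^ (p * q) * v ^ q) * h2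
    + (a * (starRingEnd ℂ) c₁₀ * (starRingEnd ℂ) u) * t1
    + (b * (starRingEnd ℂ) c₂₀ * (starRingEnd ℂ) v) * t2
    - ((t : ℂ) ^ (p * q) * (u ^ p + (starRingEnd ℂ) u)) * hμ'
end

section
/- Let p, q ≥ 2 be integers and μ ∈ ℂ ∖ {0}. If z₀ = (u₀, v₀) is a singular point of P(u,v;μ), then u₀ ≠ 0, v₀ ≠ 0, p·|u₀|^{p−1} = 1, q·|v₀|^{q−1} = 1, and there exists an integer κ such that ((p−1)/2)·arg u₀ + arg μ = ((q−1)/2)·arg v₀ + κπ. -/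
/-!
At a singular point some nonzero real functional `Re (c * ·)` kills the range of the derivative
`(a, b) ↦ μ (α a + conj a) + (β b + conj b)`, where `α = p u₀ ^ (p - 1)` and `β = q v₀ ^ (q - 1)`.
Testing it on `(a, 0)` and `(0, b)` gives `c μ α = -conj (c μ)` and `c β = -conj c`. Taking
moduli yields `|α| = |β| = 1`; eliminating `c` yields `μ α = conj μ β`, and comparing arguments of
the two sides modulo `2π` gives the relation between `arg u₀`, `arg v₀` and `arg μ`.
-/

open Complex ComplexConjugate

theorem eq_neg_conj_of_forall_re_mul_add_mul_conj_eq_zero {A B : ℂ}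
    (h : ∀ w : ℂ, (A * w + B * conj w).re = 0) : A = -conj B := by
  -- `Re (B * conj w) = Re (conj B * w)`, so `Re ((A + conj B) * w)` vanishes for every `w`.
  have hw := h (conj (A + conj B))
  have : (A * conj (A + conj B) + B * conj (conj (A + conj B))).re
      = ((A + conj B) * conj (A + conj B)).re := by
    simp only [map_add, conj_conj, add_mul, mul_add, add_re, mul_re, conj_re, conj_im]
    ring
  rw [this, mul_conj, ofReal_re, normSq_eq_zero] at hw
  exact eq_neg_of_add_eq_zero_left hw

theorem exists_ne_zero_forall_re_mul_eq_zero_of_not_surjective {E : Type*} [AddCommGroup E]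
    [Module ℝ E] (D : E →ₗ[ℝ] ℂ) (hD : ¬ Function.Surjective D) :
    ∃ c ≠ 0, ∀ z, (c * D z).re = 0 := by
  have hne : (LinearMap.range D)ᗮ ≠ ⊥ := by
    rwa [Ne, Submodule.orthogonal_eq_bot_iff, LinearMap.range_eq_top]
  obtain ⟨c, hc, hc0⟩ := Submodule.exists_mem_ne_zero_of_ne_bot hne
  refine ⟨conj c, by simpa using hc0, fun z => ?_⟩
  rw [mul_comm, ← Complex.inner]
  exact Submodule.inner_left_of_mem_orthogonal (LinearMap.mem_range_self D z) hc

theorem norm_eq_one_of_mul_eq_neg_conj {c A : ℂ} (hc : c ≠ 0) (h : c * A = -conj c) :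
    ‖A‖ = 1 := by
  have := congrArg norm h
  rw [norm_mul, norm_neg, norm_conj] at this
  exact (mul_eq_left₀ (norm_ne_zero_iff.mpr hc)).mp this

theorem ne_zero_of_natCast_mul_norm_pow_pred_eq_one {n : ℕ} (hn : 2 ≤ n) {x : ℂ}
    (h : (n : ℝ) * ‖x‖ ^ (n - 1) = 1) : x ≠ 0 := by
  rintro rfl
  simp [zero_pow (by omega : n - 1 ≠ 0)] at h

noncomputable def powAddConjDeriv (n : ℕ) (x : ℂ) : ℂ →L[ℝ] ℂ :=
  (n * x ^ (n - 1) : ℂ) • ContinuousLinearMap.id ℝ ℂ + conjCLE.toContinuousLinearMap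

@[simp]
theorem powAddConjDeriv_apply (n : ℕ) (x w : ℂ) :
    powAddConjDeriv n x w = n * x ^ (n - 1) * w + conj w := by
  simp [powAddConjDeriv]

theorem hasFDerivAt_pow_add_conj (n : ℕ) (x : ℂ) :
    HasFDerivAt (fun w : ℂ => w ^ n + conj w) (powAddConjDeriv n x) x := by
  refine (((hasDerivAt_pow n x).hasFDerivAt.restrictScalars ℝ).add
    conjCLE.toContinuousLinearMap.hasFDerivAt).congr_fderiv ?_
  ext w; simp [mul_comm]

theorem hasFDerivAt_mul_pow_add_conj_add_pow_add_conj (p q : ℕ) (μ u v : ℂ) :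
    HasFDerivAt (fun z : ℂ × ℂ => μ * (z.1 ^ p + conj z.1) + z.2 ^ q + conj z.2)
      (μ • (powAddConjDeriv p u).comp (.fst ℝ ℂ ℂ) + (powAddConjDeriv q v).comp (.snd ℝ ℂ ℂ))
      (u, v) := by
  have hfst := (hasFDerivAt_pow_add_conj p u).comp (u, v) (hasFDerivAt_fst (𝕜 := ℝ))
  have hsnd := (hasFDerivAt_pow_add_conj q v).comp (u, v) (hasFDerivAt_snd (𝕜 := ℝ))
  exact ((hfst.const_mul μ).add hsnd).congr_of_eventuallyEq (.of_forall fun z => add_assoc _ _ _)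

theorem exists_int_arg_of_mul_eq_conj_mul {μ u v : ℂ} (hμ : μ ≠ 0) (hu : u ≠ 0) (hv : v ≠ 0)
    {r s : ℝ} (hr : 0 < r) (hs : 0 < s) {m n : ℕ}
    (h : μ * (r * u ^ m) = conj μ * (s * v ^ n)) :
    ∃ κ : ℤ, (m : ℝ) / 2 * arg u + arg μ = (n : ℝ) / 2 * arg v + κ * Real.pi := by
  rw [mul_left_comm, mul_left_comm (conj μ)] at h
  have hangle := congrArg (fun z => (arg z : Real.Angle)) h
  simp only [arg_real_mul _ hr, arg_real_mul _ hs] at hangle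
  rw [arg_mul_coe_angle hμ (pow_ne_zero m hu),
    arg_mul_coe_angle ((map_ne_zero _).2 hμ) (pow_ne_zero n hv), arg_pow_coe_angle,
    arg_pow_coe_angle, arg_conj_coe_angle] at hangle
  obtain ⟨κ, hκ⟩ : ∃ κ : ℤ, (2 * arg μ + m * arg u) - n * arg v = 2 * Real.pi * κ := by
    rw [← Real.Angle.angle_eq_iff_two_pi_dvd_sub, two_mul, ← nsmul_eq_mul, ← nsmul_eq_mul,
      Real.Angle.coe_add, Real.Angle.coe_add, Real.Angle.coe_nsmul, Real.Angle.coe_nsmul,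
      add_assoc, hangle]
    abel
  exact ⟨κ, by linarith⟩

/-- A singular point `(u₀, v₀)` of `P(u,v;μ) = μ(u^p + ū) + v^q + v̄`
(a point where the real derivative is not surjective) satisfies `u₀ ≠ 0`, `v₀ ≠ 0`,
`p|u₀|^{p-1} = q|v₀|^{q-1} = 1`, and
`((p-1)/2) arg u₀ + arg μ = ((q-1)/2) arg v₀ + κπ` for some integer `κ`. -/
theorem singular_point_characterization
    (p q : ℕ) (hp : 2 ≤ p) (hq : 2 ≤ q) (μ : ℂ) (hμ : μ ≠ 0) (u₀ v₀ : ℂ)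
    (hsing : ¬ Function.Surjective
      ⇑(fderiv ℝ (fun z : ℂ × ℂ =>
          μ * (z.1 ^ p + (starRingEnd ℂ) z.1) + z.2 ^ q + (starRingEnd ℂ) z.2) (u₀, v₀))) :
    u₀ ≠ 0 ∧ v₀ ≠ 0 ∧
      (p : ℝ) * ‖u₀‖ ^ (p - 1) = 1 ∧
      (q : ℝ) * ‖v₀‖ ^ (q - 1) = 1 ∧
      ∃ κ : ℤ, ((p : ℝ) - 1) / 2 * Complex.arg u₀ + Complex.arg μ
        = ((q : ℝ) - 1) / 2 * Complex.arg v₀ + κ * Real.pi := by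
  rw [(hasFDerivAt_mul_pow_add_conj_add_pow_add_conj p q μ u₀ v₀).fderiv] at hsing
  obtain ⟨c, hc, hcD⟩ := exists_ne_zero_forall_re_mul_eq_zero_of_not_surjective _ hsing
  have hu : c * μ * (p * u₀ ^ (p - 1)) = -conj (c * μ) :=
    eq_neg_conj_of_forall_re_mul_add_mul_conj_eq_zero fun w => by
      simpa [mul_add, mul_assoc] using hcD (w, 0)
  have hv : c * (q * v₀ ^ (q - 1)) = -conj c :=
    eq_neg_conj_of_forall_re_mul_add_mul_conj_eq_zero fun w => by
      simpa [mul_add, mul_assoc] using hcD (0, w)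
  have hnu : (p : ℝ) * ‖u₀‖ ^ (p - 1) = 1 := by
    simpa using norm_eq_one_of_mul_eq_neg_conj (mul_ne_zero hc hμ) hu
  have hnv : (q : ℝ) * ‖v₀‖ ^ (q - 1) = 1 := by
    simpa using norm_eq_one_of_mul_eq_neg_conj hc hv
  have hu₀ := ne_zero_of_natCast_mul_norm_pow_pred_eq_one hp hnu
  have hv₀ := ne_zero_of_natCast_mul_norm_pow_pred_eq_one hq hnv
  have hμuv : μ * ((p : ℝ) * u₀ ^ (p - 1)) = conj μ * ((q : ℝ) * v₀ ^ (q - 1)) := by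
    apply mul_left_cancel₀ hc
    rw [map_mul] at hu
    push_cast
    linear_combination hu - conj μ * hv
  obtain ⟨κ, hκ⟩ := exists_int_arg_of_mul_eq_conj_mul hμ hu₀ hv₀
    (Nat.cast_pos.2 (by omega)) (Nat.cast_pos.2 (by omega)) hμuv
  refine ⟨hu₀, hv₀, hnu, hnv, κ, ?_⟩
  rwa [Nat.cast_pred (by omega), Nat.cast_pred (by omega)] at hκ
end

section
/- Let p, q ≥ 2 be integers, μ ∈ ℂ ∖ {0}, and u₀, v₀ ∈ ℂ ∖ {0} with p·|u₀|^{p−1} = 1 and q·|v₀|^{q−1} = 1. Then ∂R/∂r₁(x₀) = 2|μ| sin Θ₂ cos Θ₁ at x₀ = (|u₀|, arg u₀, |v₀|, arg v₀). Consequently, if cos Θ₁ ≠ 0 and cos Θ₂ ≠ 0, then the ratio s = (∂R/∂r₁(x₀))/(∂Q/∂r₁(x₀)) equals tan Θ₂. -/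
/-!
Along `r₁` both `R` and `Q` have the form `A r₁ ^ p + B r₁ + C`, whose derivative at a point with
`p r₁ ^ (p - 1) = 1` is `A + B`. Sum-to-product turns `A + B` into `2|μ| sin Θ₂ cos Θ₁` for `R` and
`2|μ| cos Θ₂ cos Θ₁` for `Q`, so their ratio is `tan Θ₂`.
-/

open Real

theorem hasDerivAt_mul_pow_add_mul_add_of_critical {p : ℕ} {x : ℝ} (hx : (p : ℝ) * x ^ (p - 1) = 1)
    (A B C : ℝ) : HasDerivAt (fun r : ℝ => A * r ^ p + B * r + C) (A + B) x := by
  have h := (((hasDerivAt_pow p x).const_mul A).add ((hasDerivAt_id x).const_mul B)).add_const C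
  simpa [hx] using h

theorem sin_mul_add_add_sin_neg_add (n θ a : ℝ) :
    sin (n * θ + a) + sin (-θ + a) = 2 * sin ((n - 1) / 2 * θ + a) * cos ((n + 1) / 2 * θ) := by
  rw [show -θ + a = -(θ - a) by ring, sin_neg, ← sub_eq_add_neg, sin_sub_sin]
  ring_nf

theorem cos_mul_add_add_cos_neg_add (n θ a : ℝ) :
    cos (n * θ + a) + cos (-θ + a) = 2 * cos ((n - 1) / 2 * θ + a) * cos ((n + 1) / 2 * θ) := by
  rw [cos_add_cos]
  ring_nf

theorem derivative_of_imaginary_part_and_slope_general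
    (p q : ℕ) (μ : ℂ) (hμ : μ ≠ 0)
    (u₀ v₀ : ℂ)
    (hu : (p : ℝ) * ‖u₀‖ ^ (p - 1) = 1)
    (Q R : ℝ → ℝ → ℝ → ℝ → ℝ)
    (hQ : ∀ r₁ θ₁ r₂ θ₂, Q r₁ θ₁ r₂ θ₂ =
      ‖μ‖ * r₁ ^ p * Real.cos (p * θ₁ + Complex.arg μ)
        + ‖μ‖ * r₁ * Real.cos (-θ₁ + Complex.arg μ)
        + r₂ ^ q * Real.cos (q * θ₂) + r₂ * Real.cos (-θ₂))
    (hR : ∀ r₁ θ₁ r₂ θ₂, R r₁ θ₁ r₂ θ₂ =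
      ‖μ‖ * r₁ ^ p * Real.sin (p * θ₁ + Complex.arg μ)
        + ‖μ‖ * r₁ * Real.sin (-θ₁ + Complex.arg μ)
        + r₂ ^ q * Real.sin (q * θ₂) + r₂ * Real.sin (-θ₂))
    (Θ₁ Θ₂ : ℝ)
    (hΘ₁ : Θ₁ = ((p : ℝ) + 1) / 2 * Complex.arg u₀)
    (hΘ₂ : Θ₂ = ((p : ℝ) - 1) / 2 * Complex.arg u₀ + Complex.arg μ) :
    deriv (fun r₁ => R r₁ (Complex.arg u₀) (‖v₀‖) (Complex.arg v₀)) (‖u₀‖)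
        = 2 * ‖μ‖ * Real.sin Θ₂ * Real.cos Θ₁ ∧
    (Real.cos Θ₁ ≠ 0 → Real.cos Θ₂ ≠ 0 →
      deriv (fun r₁ => R r₁ (Complex.arg u₀) (‖v₀‖) (Complex.arg v₀)) (‖u₀‖)
        / deriv (fun r₁ => Q r₁ (Complex.arg u₀) (‖v₀‖) (Complex.arg v₀)) (‖u₀‖)
        = Real.tan Θ₂) := by
  set θ := Complex.arg u₀
  set a := Complex.arg μ
  set ρ := ‖v₀‖
  set φ := Complex.arg v₀
  have hR' : HasDerivAt (fun r₁ => R r₁ θ ρ φ) (2 * ‖μ‖ * sin Θ₂ * cos Θ₁) ‖u₀‖ := by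
    convert hasDerivAt_mul_pow_add_mul_add_of_critical hu (‖μ‖ * sin (p * θ + a))
      (‖μ‖ * sin (-θ + a)) (ρ ^ q * sin (q * φ) + ρ * sin (-φ)) using 1
    · funext r; rw [hR]; ring
    · rw [← mul_add, sin_mul_add_add_sin_neg_add, hΘ₁, hΘ₂]; ring
  have hQ' : HasDerivAt (fun r₁ => Q r₁ θ ρ φ) (2 * ‖μ‖ * cos Θ₂ * cos Θ₁) ‖u₀‖ := by
    convert hasDerivAt_mul_pow_add_mul_add_of_critical hu (‖μ‖ * cos (p * θ + a))
      (‖μ‖ * cos (-θ + a)) (ρ ^ q * cos (q * φ) + ρ * cos (-φ)) using 1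
    · funext r; rw [hQ]; ring
    · rw [← mul_add, cos_mul_add_add_cos_neg_add, hΘ₁, hΘ₂]; ring
  refine ⟨hR'.deriv, fun hcos₁ hcos₂ => ?_⟩
  have hμ' : ‖μ‖ ≠ 0 := norm_ne_zero_iff.mpr hμ
  rw [hR'.deriv, hQ'.deriv, tan_eq_sin_div_cos]
  field_simp

/-- Lemma 3.7: at a point satisfying the singularity conditions,
`∂R/∂r₁ = 2|μ| sin Θ₂ cos Θ₁`, hence `s = (∂R/∂r₁)/(∂Q/∂r₁) = tan Θ₂`
when `cos Θ₁ ≠ 0` and `cos Θ₂ ≠ 0`. -/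
theorem derivative_of_imaginary_part_and_slope
    (p q : ℕ) (hp : 2 ≤ p) (hq : 2 ≤ q) (μ : ℂ) (hμ : μ ≠ 0)
    (u₀ v₀ : ℂ) (hu₀ : u₀ ≠ 0) (hv₀ : v₀ ≠ 0)
    (hu : (p : ℝ) * ‖u₀‖ ^ (p - 1) = 1)
    (hv : (q : ℝ) * ‖v₀‖ ^ (q - 1) = 1)
    (Q R : ℝ → ℝ → ℝ → ℝ → ℝ)
    (hQ : ∀ r₁ θ₁ r₂ θ₂, Q r₁ θ₁ r₂ θ₂ =
      ‖μ‖ * r₁ ^ p * Real.cos (p * θ₁ + Complex.arg μ)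
        + ‖μ‖ * r₁ * Real.cos (-θ₁ + Complex.arg μ)
        + r₂ ^ q * Real.cos (q * θ₂) + r₂ * Real.cos (-θ₂))
    (hR : ∀ r₁ θ₁ r₂ θ₂, R r₁ θ₁ r₂ θ₂ =
      ‖μ‖ * r₁ ^ p * Real.sin (p * θ₁ + Complex.arg μ)
        + ‖μ‖ * r₁ * Real.sin (-θ₁ + Complex.arg μ)
        + r₂ ^ q * Real.sin (q * θ₂) + r₂ * Real.sin (-θ₂))
    (Θ₁ Θ₂ : ℝ)
    (hΘ₁ : Θ₁ = ((p : ℝ) + 1) / 2 * Complex.arg u₀)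
    (hΘ₂ : Θ₂ = ((p : ℝ) - 1) / 2 * Complex.arg u₀ + Complex.arg μ) :
    deriv (fun r₁ => R r₁ (Complex.arg u₀) (‖v₀‖) (Complex.arg v₀)) (‖u₀‖)
        = 2 * ‖μ‖ * Real.sin Θ₂ * Real.cos Θ₁ ∧
    (Real.cos Θ₁ ≠ 0 → Real.cos Θ₂ ≠ 0 →
      deriv (fun r₁ => R r₁ (Complex.arg u₀) (‖v₀‖) (Complex.arg v₀)) (‖u₀‖)
        / deriv (fun r₁ => Q r₁ (Complex.arg u₀) (‖v₀‖) (Complex.arg v₀)) (‖u₀‖)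
        = Real.tan Θ₂) :=
  derivative_of_imaginary_part_and_slope_general p q μ hμ u₀ v₀ hu Q R hQ hR Θ₁ Θ₂ hΘ₁ hΘ₂
end

section
/- Let p, q ≥ 2 be integers, μ ∈ ℂ ∖ {0}, and u₀, v₀ ∈ ℂ ∖ {0} with p·|u₀|^{p−1} = 1, q·|v₀|^{q−1} = 1, and Θ₂ = Θ₄ + κπ for some integer κ; assume cos Θ₂ ≠ 0 and set R̂ = R − tan(Θ₂)·Q. Then at x₀ = (|u₀|, arg u₀, |v₀|, arg v₀) the second partial derivatives of R̂ are: R̂_{r₁r₁}(x₀) = p(p−1)|μ||u₀|^{p−2} sin Θ₁ / cos Θ₂, R̂_{r₁θ₁}(x₀) = (p−1)|μ| cos Θ₁ / cos Θ₂, R̂_{θ₁θ₁}(x₀) = −(p−1)|μ||u₀| sin Θ₁ / cos Θ₂, R̂_{r₂r₂}(x₀) = (−1)^κ q(q−1)|v₀|^{q−2} sin Θ₃ / cos Θ₂, R̂_{r₂θ₂}(x₀) = (−1)^κ (q−1) cos Θ₃ / cos Θ₂, and R̂_{θ₂θ₂}(x₀) = (−1)^{κ+1} (q−1)|v₀| sin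 Θ₃ / cos Θ₂. -/
/-!
Because `sin x - tan t * cos x = sin (x - t) / cos t`, the function `R̂ = R - tan Θ₂ * Q` is
`Im (e^{-iΘ₂} P) / cos Θ₂`, a sum of two blocks `Im (e^{iφ} (zⁿ + z̄))` in the polar coordinates of
`u` and of `v`, with `φ = arg μ - Θ₂` and `φ = -Θ₂`. The second derivatives of one block are
computed directly. At the given point its two phases `nθ + φ` and `-θ + φ` are
`±(n + 1)θ/2 + kπ` (with `k = 0` for `u` and `k = -κ` for `v`), and `n rⁿ⁻¹ = 1` collapses the
mixed and angular derivatives to multiples of `n - 1`.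
-/

open Real

theorem sin_sub_tan_mul_cos {t : ℝ} (ht : cos t ≠ 0) (x : ℝ) :
    sin x - tan t * cos x = sin (x - t) / cos t := by
  rw [tan_eq_sin_div_cos, sin_sub]
  field_simp

/-- `Im (e^{iφ} (zⁿ + z̄))` at `z = r e^{iθ}`. -/
noncomputable def imPowAddConj (n : ℕ) (φ r θ : ℝ) : ℝ :=
  r ^ n * sin (n * θ + φ) + r * sin (-θ + φ)

theorem hasDerivAt_sin_mul_add (c φ θ : ℝ) :
    HasDerivAt (fun θ => sin (c * θ + φ)) (c * cos (c * θ + φ)) θ := by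
  simpa [mul_comm] using (((hasDerivAt_id' θ).const_mul c).add_const φ).sin

theorem hasDerivAt_cos_mul_add (c φ θ : ℝ) :
    HasDerivAt (fun θ => cos (c * θ + φ)) (-(c * sin (c * θ + φ))) θ := by
  simpa [mul_comm] using (((hasDerivAt_id' θ).const_mul c).add_const φ).cos

theorem hasDerivAt_sin_neg_add (φ θ : ℝ) :
    HasDerivAt (fun θ => sin (-θ + φ)) (-cos (-θ + φ)) θ := by
  simpa using hasDerivAt_sin_mul_add (-1) φ θ

theorem hasDerivAt_cos_neg_add (φ θ : ℝ) :
    HasDerivAt (fun θ => cos (-θ + φ)) (sin (-θ + φ)) θ := by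
  simpa using hasDerivAt_cos_mul_add (-1) φ θ

section
variable (n : ℕ) (φ : ℝ)

theorem hasDerivAt_imPowAddConj_radius (r θ : ℝ) :
    HasDerivAt (fun r => imPowAddConj n φ r θ)
      (n * r ^ (n - 1) * sin (n * θ + φ) + sin (-θ + φ)) r := by
  unfold imPowAddConj
  simpa using ((hasDerivAt_pow n r).mul_const (sin (n * θ + φ))).fun_add
      ((hasDerivAt_id' r).mul_const (sin (-θ + φ)))

theorem hasDerivAt_imPowAddConj_angle (r θ : ℝ) :
    HasDerivAt (fun θ => imPowAddConj n φ r θ)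
      (n * r ^ n * cos (n * θ + φ) - r * cos (-θ + φ)) θ :=
  (((hasDerivAt_sin_mul_add n φ θ).const_mul (r ^ n)).fun_add
    ((hasDerivAt_sin_neg_add φ θ).const_mul r)).congr_deriv (by ring)

theorem deriv_deriv_imPowAddConj_radius (r θ : ℝ) :
    deriv (deriv fun r => imPowAddConj n φ r θ) r
      = n * (n - 1) * r ^ (n - 2) * sin (n * θ + φ) := by
  have h : deriv (fun r => imPowAddConj n φ r θ)
      = fun r => deriv (· ^ n) r * sin (n * θ + φ) + sin (-θ + φ) := by
    funext r
    rw [(hasDerivAt_imPowAddConj_radius n φ r θ).deriv, deriv_pow_field]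
  have h₂ := iter_deriv_pow n r 2
  rw [Function.iterate_succ_apply, Function.iterate_one] at h₂
  simp only [h, deriv_add_const', deriv_mul_const_field', h₂, Finset.prod_range_succ,
    Finset.prod_range_zero]
  push_cast
  ring

theorem deriv_angle_deriv_radius_imPowAddConj (r θ : ℝ) :
    deriv (fun θ => deriv (fun r => imPowAddConj n φ r θ) r) θ
      = n ^ 2 * r ^ (n - 1) * cos (n * θ + φ) - cos (-θ + φ) := by
  simp only [(hasDerivAt_imPowAddConj_radius n φ r _).deriv]
  exact ((((hasDerivAt_sin_mul_add n φ θ).const_mul (n * r ^ (n - 1))).fun_add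
    (hasDerivAt_sin_neg_add φ θ)).congr_deriv (by ring)).deriv

theorem deriv_deriv_imPowAddConj_angle (r θ : ℝ) :
    deriv (deriv fun θ => imPowAddConj n φ r θ) θ
      = -(n ^ 2 * r ^ n * sin (n * θ + φ)) - r * sin (-θ + φ) := by
  rw [funext fun θ => (hasDerivAt_imPowAddConj_angle n φ r θ).deriv]
  exact ((((hasDerivAt_cos_mul_add n φ θ).const_mul (n * r ^ n)).fun_sub
    ((hasDerivAt_cos_neg_add φ θ).const_mul r)).congr_deriv (by ring)).deriv

end

section
variable {n : ℕ} {φ r θ : ℝ} {k : ℤ}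

theorem phases_of_half_angle_eq (hφ : ((n : ℝ) - 1) / 2 * θ + φ = k * π) :
    n * θ + φ = (n + 1) / 2 * θ + k * π ∧ -θ + φ = -((n + 1) / 2 * θ) + k * π := by
  constructor <;> linarith

theorem deriv_deriv_imPowAddConj_radius_of_half_angle_eq
    (hφ : ((n : ℝ) - 1) / 2 * θ + φ = k * π) :
    deriv (deriv fun r => imPowAddConj n φ r θ) r
      = (-1) ^ k * (n * (n - 1) * r ^ (n - 2) * sin ((n + 1) / 2 * θ)) := by
  rw [deriv_deriv_imPowAddConj_radius, (phases_of_half_angle_eq hφ).1, sin_add_int_mul_pi]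
  ring

theorem deriv_angle_deriv_radius_imPowAddConj_of_critical
    (hφ : ((n : ℝ) - 1) / 2 * θ + φ = k * π) (hr : n * r ^ (n - 1) = 1) :
    deriv (fun θ => deriv (fun r => imPowAddConj n φ r θ) r) θ
      = (-1) ^ k * ((n - 1) * cos ((n + 1) / 2 * θ)) := by
  obtain ⟨h₁, h₂⟩ := phases_of_half_angle_eq hφ
  rw [deriv_angle_deriv_radius_imPowAddConj, h₁, h₂, cos_add_int_mul_pi, cos_add_int_mul_pi,
    cos_neg]
  linear_combination (n * (-1) ^ k * cos ((n + 1) / 2 * θ)) * hr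

theorem deriv_deriv_imPowAddConj_angle_of_critical
    (hφ : ((n : ℝ) - 1) / 2 * θ + φ = k * π) (hr : n * r ^ (n - 1) = 1) :
    deriv (deriv fun θ => imPowAddConj n φ r θ) θ
      = -((-1) ^ k * ((n - 1) * r * sin ((n + 1) / 2 * θ))) := by
  obtain ⟨h₁, h₂⟩ := phases_of_half_angle_eq hφ
  have hn : n ≠ 0 := by rintro rfl; simp at hr
  have hpow : r ^ n = r ^ (n - 1) * r := by
    rw [← pow_succ, Nat.sub_add_cancel (Nat.pos_of_ne_zero hn)]
  rw [deriv_deriv_imPowAddConj_angle, h₁, h₂, sin_add_int_mul_pi, sin_add_int_mul_pi, sin_neg]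
  linear_combination (-(n * (-1) ^ k * r * sin ((n + 1) / 2 * θ))) * hr
    - (n ^ 2 * (-1) ^ k * sin ((n + 1) / 2 * θ)) * hpow

end

theorem second_derivatives_of_Rhat_general
    (p q : ℕ) (μ : ℂ)
    (u₀ v₀ : ℂ)
    (hu : (p : ℝ) * ‖u₀‖ ^ (p - 1) = 1)
    (hv : (q : ℝ) * ‖v₀‖ ^ (q - 1) = 1)
    (Q R Rhat : ℝ → ℝ → ℝ → ℝ → ℝ)
    (hQ : ∀ r₁ θ₁ r₂ θ₂, Q r₁ θ₁ r₂ θ₂ =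
      ‖μ‖ * r₁ ^ p * Real.cos (p * θ₁ + Complex.arg μ)
        + ‖μ‖ * r₁ * Real.cos (-θ₁ + Complex.arg μ)
        + r₂ ^ q * Real.cos (q * θ₂) + r₂ * Real.cos (-θ₂))
    (hR : ∀ r₁ θ₁ r₂ θ₂, R r₁ θ₁ r₂ θ₂ =
      ‖μ‖ * r₁ ^ p * Real.sin (p * θ₁ + Complex.arg μ)
        + ‖μ‖ * r₁ * Real.sin (-θ₁ + Complex.arg μ)
        + r₂ ^ q * Real.sin (q * θ₂) + r₂ * Real.sin (-θ₂))
    (Θ₁ Θ₂ Θ₃ Θ₄ : ℝ)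
    (hΘ₁ : Θ₁ = ((p : ℝ) + 1) / 2 * Complex.arg u₀)
    (hΘ₂ : Θ₂ = ((p : ℝ) - 1) / 2 * Complex.arg u₀ + Complex.arg μ)
    (hΘ₃ : Θ₃ = ((q : ℝ) + 1) / 2 * Complex.arg v₀)
    (hΘ₄ : Θ₄ = ((q : ℝ) - 1) / 2 * Complex.arg v₀)
    (κ : ℤ) (hκ : Θ₂ = Θ₄ + κ * Real.pi)
    (hcos : Real.cos Θ₂ ≠ 0)
    (hRhat : ∀ r₁ θ₁ r₂ θ₂, Rhat r₁ θ₁ r₂ θ₂ =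
      R r₁ θ₁ r₂ θ₂ - Real.tan Θ₂ * Q r₁ θ₁ r₂ θ₂) :
    deriv (deriv (fun r₁ => Rhat r₁ (Complex.arg u₀) (‖v₀‖) (Complex.arg v₀)))
        (‖u₀‖)
      = p * ((p : ℝ) - 1) * ‖μ‖ * ‖u₀‖ ^ (p - 2) * Real.sin Θ₁
          / Real.cos Θ₂ ∧
    deriv (fun θ₁ =>
        deriv (fun r₁ => Rhat r₁ θ₁ (‖v₀‖) (Complex.arg v₀)) (‖u₀‖))
        (Complex.arg u₀)
      = ((p : ℝ) - 1) * ‖μ‖ * Real.cos Θ₁ / Real.cos Θ₂ ∧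
    deriv (deriv (fun θ₁ => Rhat (‖u₀‖) θ₁ (‖v₀‖) (Complex.arg v₀)))
        (Complex.arg u₀)
      = -(((p : ℝ) - 1) * ‖μ‖ * ‖u₀‖ * Real.sin Θ₁) / Real.cos Θ₂ ∧
    deriv (deriv (fun r₂ => Rhat (‖u₀‖) (Complex.arg u₀) r₂ (Complex.arg v₀)))
        (‖v₀‖)
      = (-1 : ℝ) ^ κ * (q * ((q : ℝ) - 1) * ‖v₀‖ ^ (q - 2) * Real.sin Θ₃)
          / Real.cos Θ₂ ∧
    deriv (fun θ₂ =>
        deriv (fun r₂ => Rhat (‖u₀‖) (Complex.arg u₀) r₂ θ₂) (‖v₀‖))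
        (Complex.arg v₀)
      = (-1 : ℝ) ^ κ * (((q : ℝ) - 1) * Real.cos Θ₃) / Real.cos Θ₂ ∧
    deriv (deriv (fun θ₂ => Rhat (‖u₀‖) (Complex.arg u₀) (‖v₀‖) θ₂))
        (Complex.arg v₀)
      = (-1 : ℝ) ^ (κ + 1) * (((q : ℝ) - 1) * ‖v₀‖ * Real.sin Θ₃) / Real.cos Θ₂ := by
  have hRhat_blocks : ∀ r₁ θ₁ r₂ θ₂, Rhat r₁ θ₁ r₂ θ₂ =
      ‖μ‖ / cos Θ₂ * imPowAddConj p (Complex.arg μ - Θ₂) r₁ θ₁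
        + 1 / cos Θ₂ * imPowAddConj q (-Θ₂) r₂ θ₂ := by
    intro r₁ θ₁ r₂ θ₂
    have key := sin_sub_tan_mul_cos hcos
    rw [hRhat, hR, hQ]
    simp only [imPowAddConj, add_sub_assoc', ← sub_eq_add_neg]
    linear_combination ‖μ‖ * r₁ ^ p * key (p * θ₁ + Complex.arg μ)
      + ‖μ‖ * r₁ * key (-θ₁ + Complex.arg μ) + r₂ ^ q * key (q * θ₂) + r₂ * key (-θ₂)
  have hφ₁ : ((p : ℝ) - 1) / 2 * Complex.arg u₀ + (Complex.arg μ - Θ₂) = ((0 : ℤ) : ℝ) * π := by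
    rw [hΘ₂]; push_cast; ring
  have hφ₂ : ((q : ℝ) - 1) / 2 * Complex.arg v₀ + -Θ₂ = ((-κ : ℤ) : ℝ) * π := by
    rw [hκ, hΘ₄]; push_cast; ring
  have hsign : (-1 : ℝ) ^ (-κ) = (-1) ^ κ := by rw [zpow_neg, ← inv_zpow, inv_neg_one]
  simp only [hRhat_blocks, deriv_add_const', deriv_const_add', deriv_const_mul_field',
    deriv_deriv_imPowAddConj_radius_of_half_angle_eq hφ₁,
    deriv_deriv_imPowAddConj_radius_of_half_angle_eq hφ₂,
    deriv_angle_deriv_radius_imPowAddConj_of_critical hφ₁ hu,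
    deriv_angle_deriv_radius_imPowAddConj_of_critical hφ₂ hv,
    deriv_deriv_imPowAddConj_angle_of_critical hφ₁ hu,
    deriv_deriv_imPowAddConj_angle_of_critical hφ₂ hv,
    ← hΘ₁, ← hΘ₃, hsign, zpow_zero, zpow_add_one₀ (by norm_num : (-1 : ℝ) ≠ 0)]
  refine ⟨?_, ?_, ?_, ?_, ?_, ?_⟩ <;> ring

/-- Lemma 3.8: the second partial derivatives of `R̂ = R - tan(Θ₂) Q`
at a singular point, expressed via `Θ₁, Θ₂, Θ₃` and `(-1)^κ`. -/
theorem second_derivatives_of_Rhat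
    (p q : ℕ) (hp : 2 ≤ p) (hq : 2 ≤ q) (μ : ℂ) (hμ : μ ≠ 0)
    (u₀ v₀ : ℂ) (hu₀ : u₀ ≠ 0) (hv₀ : v₀ ≠ 0)
    (hu : (p : ℝ) * ‖u₀‖ ^ (p - 1) = 1)
    (hv : (q : ℝ) * ‖v₀‖ ^ (q - 1) = 1)
    (Q R Rhat : ℝ → ℝ → ℝ → ℝ → ℝ)
    (hQ : ∀ r₁ θ₁ r₂ θ₂, Q r₁ θ₁ r₂ θ₂ =
      ‖μ‖ * r₁ ^ p * Real.cos (p * θ₁ + Complex.arg μ)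
        + ‖μ‖ * r₁ * Real.cos (-θ₁ + Complex.arg μ)
        + r₂ ^ q * Real.cos (q * θ₂) + r₂ * Real.cos (-θ₂))
    (hR : ∀ r₁ θ₁ r₂ θ₂, R r₁ θ₁ r₂ θ₂ =
      ‖μ‖ * r₁ ^ p * Real.sin (p * θ₁ + Complex.arg μ)
        + ‖μ‖ * r₁ * Real.sin (-θ₁ + Complex.arg μ)
        + r₂ ^ q * Real.sin (q * θ₂) + r₂ * Real.sin (-θ₂))
    (Θ₁ Θ₂ Θ₃ Θ₄ : ℝ)
    (hΘ₁ : Θ₁ = ((p : ℝ) + 1) / 2 * Complex.arg u₀)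
    (hΘ₂ : Θ₂ = ((p : ℝ) - 1) / 2 * Complex.arg u₀ + Complex.arg μ)
    (hΘ₃ : Θ₃ = ((q : ℝ) + 1) / 2 * Complex.arg v₀)
    (hΘ₄ : Θ₄ = ((q : ℝ) - 1) / 2 * Complex.arg v₀)
    (κ : ℤ) (hκ : Θ₂ = Θ₄ + κ * Real.pi)
    (hcos : Real.cos Θ₂ ≠ 0)
    (hRhat : ∀ r₁ θ₁ r₂ θ₂, Rhat r₁ θ₁ r₂ θ₂ =
      R r₁ θ₁ r₂ θ₂ - Real.tan Θ₂ * Q r₁ θ₁ r₂ θ₂) :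
    deriv (deriv (fun r₁ => Rhat r₁ (Complex.arg u₀) (‖v₀‖) (Complex.arg v₀)))
        (‖u₀‖)
      = p * ((p : ℝ) - 1) * ‖μ‖ * ‖u₀‖ ^ (p - 2) * Real.sin Θ₁
          / Real.cos Θ₂ ∧
    deriv (fun θ₁ =>
        deriv (fun r₁ => Rhat r₁ θ₁ (‖v₀‖) (Complex.arg v₀)) (‖u₀‖))
        (Complex.arg u₀)
      = ((p : ℝ) - 1) * ‖μ‖ * Real.cos Θ₁ / Real.cos Θ₂ ∧
    deriv (deriv (fun θ₁ => Rhat (‖u₀‖) θ₁ (‖v₀‖) (Complex.arg v₀)))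
        (Complex.arg u₀)
      = -(((p : ℝ) - 1) * ‖μ‖ * ‖u₀‖ * Real.sin Θ₁) / Real.cos Θ₂ ∧
    deriv (deriv (fun r₂ => Rhat (‖u₀‖) (Complex.arg u₀) r₂ (Complex.arg v₀)))
        (‖v₀‖)
      = (-1 : ℝ) ^ κ * (q * ((q : ℝ) - 1) * ‖v₀‖ ^ (q - 2) * Real.sin Θ₃)
          / Real.cos Θ₂ ∧
    deriv (fun θ₂ =>
        deriv (fun r₂ => Rhat (‖u₀‖) (Complex.arg u₀) r₂ θ₂) (‖v₀‖))
        (Complex.arg v₀)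
      = (-1 : ℝ) ^ κ * (((q : ℝ) - 1) * Real.cos Θ₃) / Real.cos Θ₂ ∧
    deriv (deriv (fun θ₂ => Rhat (‖u₀‖) (Complex.arg u₀) (‖v₀‖) θ₂))
        (Complex.arg v₀)
      = (-1 : ℝ) ^ (κ + 1) * (((q : ℝ) - 1) * ‖v₀‖ * Real.sin Θ₃) / Real.cos Θ₂ :=
  second_derivatives_of_Rhat_general p q μ u₀ v₀ hu hv Q R Rhat hQ hR Θ₁ Θ₂ Θ₃ Θ₄ hΘ₁ hΘ₂ hΘ₃ hΘ₄ κ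
    hκ hcos hRhat
end

section
/- Let p, q ≥ 2 be integers, μ ∈ ℂ ∖ {0}, and u₀, v₀ ∈ ℂ ∖ {0} with p·|u₀|^{p−1} = 1, q·|v₀|^{q−1} = 1, and Θ₂ = Θ₄ + κπ for some integer κ; assume cos Θ₂ ≠ 0 and k₁ ≠ 0, and set R̂ = R − tan(Θ₂)·Q. Let A = R̂_{r₁r₁}(x₀)/k₁², B = R̂_{r₁θ₁}(x₀)/k₁, C = R̂_{θ₁θ₁}(x₀), D = R̂_{r₂r₂}(x₀), E = R̂_{r₂θ₂}(x₀), F = R̂_{θ₂θ₂}(x₀), and let H be the 3×3 matrix [[k₂²A − 2k₂B + C, k₃(k₂A − B), k₄(k₂A − B)], [k₃(k₂A − B), k₃²A + D, k₃k₄A + E], [k₄(k₂A − B), k₃k₄A + E, k₄²A + F]]. Then det H = −(1/(k₁² cos Θ₂))·4(p−1)(q−1)|μ|²·φ, where φ = (−1)^κ (p−1)|v₀| sin Θ₃ + (q−1)|μ||u₀| sin Θ₁. -/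
/-!
Both `Q` and `R̂` split into a block in `(r₁, θ₁)` and a block in `(r₂, θ₂)`, each of the form
`r ↦ Im (e^{iγ} (u^n + ū))` with `u = r e^{iθ}`; for `R̂` the phase is shifted by `-Θ₂`, since
`sin x - tan Θ₂ cos x = sin (x - Θ₂) / cos Θ₂`. Expanding `det H` shows that it only depends on two
invariants of each block: the Hessian determinant of the `R̂`-block and its Hessian bordered by the
gradient of the `Q`-block. At a critical radius `n r^{n-1} = 1` the half-angle substitution
`nθ + γ = Φ + ψ`, `-θ + γ = ψ - Φ` (with `Φ = (n+1)θ/2`) turns these into `-(n-1)²` and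
`4r(n-1) sin²ψ_Q cos ψ_R sin Φ`; that `sin ψ_R = 0` for the second block is the condition
`Θ₂ = Θ₄ + κπ`.
-/

open Real

theorem natCast_mul_pow_eq_self {n : ℕ} {s : ℝ} (h : n * s ^ (n - 1) = 1) : n * s ^ n = s := by
  rcases n with _ | n
  · simp at h
  · rw [pow_succ, Nat.add_sub_cancel] at *
    linear_combination s * h

theorem mul_natCast_mul_sub_one_mul_pow_sub_two {n : ℕ} {s : ℝ} (h : n * s ^ (n - 1) = 1) :
    s * (n * (n - 1) * s ^ (n - 2)) = n - 1 := by
  rcases n with _ | _ | n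
  · simp at h
  · simp
  · simp only [Nat.add_sub_cancel, pow_succ] at *
    push_cast at *
    linear_combination (n + 1 : ℝ) * h

noncomputable def imPolar (n : ℕ) (γ r θ : ℝ) : ℝ := r ^ n * sin (n * θ + γ) + r * sin (-θ + γ)

namespace imPolar

theorem hasDerivAt_radius (n : ℕ) (γ θ r : ℝ) :
    HasDerivAt (fun r => imPolar n γ r θ) (n * r ^ (n - 1) * sin (n * θ + γ) + sin (-θ + γ)) r := by
  unfold imPolar
  refine (((hasDerivAt_pow n r).mul_const (sin (n * θ + γ))).fun_add
    ((hasDerivAt_id' r).mul_const (sin (-θ + γ)))).congr_deriv ?_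
  ring

theorem hasDerivAt_angle (n : ℕ) (γ r θ : ℝ) :
    HasDerivAt (fun θ => imPolar n γ r θ) (n * r ^ n * cos (n * θ + γ) - r * cos (-θ + γ)) θ := by
  unfold imPolar
  refine (((((hasDerivAt_id' θ).const_mul (n : ℝ)).add_const γ).sin.const_mul (r ^ n)).fun_add
    (((hasDerivAt_neg' θ).add_const γ).sin.const_mul r)).congr_deriv ?_
  ring

theorem deriv_radius (n : ℕ) (γ θ : ℝ) :
    deriv (fun r => imPolar n γ r θ) = fun r => n * r ^ (n - 1) * sin (n * θ + γ) + sin (-θ + γ) :=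
  funext fun r => (hasDerivAt_radius n γ θ r).deriv

theorem deriv_angle (n : ℕ) (γ r : ℝ) :
    deriv (fun θ => imPolar n γ r θ) = fun θ => n * r ^ n * cos (n * θ + γ) - r * cos (-θ + γ) :=
  funext fun θ => (hasDerivAt_angle n γ r θ).deriv

theorem deriv_deriv_radius (n : ℕ) (γ θ r : ℝ) :
    deriv (deriv (fun r => imPolar n γ r θ)) r = n * (n - 1) * r ^ (n - 2) * sin (n * θ + γ) := by
  rw [deriv_radius, ((((hasDerivAt_pow (n - 1) r).const_mul (n : ℝ)).mul_const
    (sin (n * θ + γ))).add_const (sin (-θ + γ))).deriv]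
  rcases n with _ | n
  · simp
  · rw [show n + 1 - 1 - 1 = n + 1 - 2 by omega]
    push_cast
    ring

theorem deriv_angle_deriv_radius (n : ℕ) (γ r θ : ℝ) :
    deriv (fun θ => deriv (fun r => imPolar n γ r θ) r) θ
      = n ^ 2 * r ^ (n - 1) * cos (n * θ + γ) - cos (-θ + γ) := by
  simp only [deriv_radius]
  rw [((((hasDerivAt_id' θ).const_mul (n : ℝ)).add_const γ).sin.const_mul
    ((n : ℝ) * r ^ (n - 1)) |>.fun_add ((hasDerivAt_neg' θ).add_const γ).sin).deriv]
  ring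

theorem deriv_deriv_angle (n : ℕ) (γ r θ : ℝ) :
    deriv (deriv (fun θ => imPolar n γ r θ)) θ
      = -(n ^ 2 * r ^ n * sin (n * θ + γ)) - r * sin (-θ + γ) := by
  rw [deriv_angle, ((((hasDerivAt_id' θ).const_mul (n : ℝ)).add_const γ).cos.const_mul
    ((n : ℝ) * r ^ n) |>.fun_sub (((hasDerivAt_neg' θ).add_const γ).cos.const_mul r)).deriv]
  ring


section CriticalRadius

variable {n : ℕ} {γ δ s a Φ ψ χ : ℝ}

theorem phases_of_half_angles (hΦ : Φ = (n + 1) / 2 * a) (hψ : ψ = (n - 1) / 2 * a + γ) :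
    n * a + γ = Φ + ψ ∧ -a + γ = ψ - Φ := by
  subst hΦ hψ
  constructor <;> ring

theorem deriv_radius_eq (hs : n * s ^ (n - 1) = 1) (hΦ : Φ = (n + 1) / 2 * a)
    (hψ : ψ = (n - 1) / 2 * a + γ) :
    deriv (fun r => imPolar n γ r a) s = 2 * sin ψ * cos Φ := by
  obtain ⟨hadd, hsub⟩ := phases_of_half_angles hΦ hψ
  simp only [deriv_radius, hs, hadd, hsub, sin_add, sin_sub]
  ring

theorem deriv_angle_eq (hs : n * s ^ (n - 1) = 1) (hΦ : Φ = (n + 1) / 2 * a)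
    (hψ : ψ = (n - 1) / 2 * a + γ) :
    deriv (fun θ => imPolar n γ s θ) a = -2 * s * sin Φ * sin ψ := by
  obtain ⟨hadd, hsub⟩ := phases_of_half_angles hΦ hψ
  simp only [deriv_angle, natCast_mul_pow_eq_self hs, hadd, hsub, cos_add, cos_sub]
  ring

theorem mul_deriv_deriv_radius_eq (hs : n * s ^ (n - 1) = 1) (hΦ : Φ = (n + 1) / 2 * a)
    (hψ : ψ = (n - 1) / 2 * a + γ) (hψ₀ : sin ψ = 0) :
    s * deriv (deriv (fun r => imPolar n γ r a)) s = (n - 1) * cos ψ * sin Φ := by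
  obtain ⟨hadd, -⟩ := phases_of_half_angles hΦ hψ
  rw [deriv_deriv_radius, hadd, sin_add, hψ₀]
  linear_combination (cos ψ * sin Φ) * mul_natCast_mul_sub_one_mul_pow_sub_two hs

theorem deriv_angle_deriv_radius_eq (hs : n * s ^ (n - 1) = 1) (hΦ : Φ = (n + 1) / 2 * a)
    (hψ : ψ = (n - 1) / 2 * a + γ) (hψ₀ : sin ψ = 0) :
    deriv (fun θ => deriv (fun r => imPolar n γ r θ) s) a = (n - 1) * cos ψ * cos Φ := by
  obtain ⟨hadd, hsub⟩ := phases_of_half_angles hΦ hψ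
  rw [deriv_angle_deriv_radius, hadd, hsub, cos_add, cos_sub, hψ₀]
  linear_combination (n * cos Φ * cos ψ) * hs

theorem deriv_deriv_angle_eq (hs : n * s ^ (n - 1) = 1) (hΦ : Φ = (n + 1) / 2 * a)
    (hψ : ψ = (n - 1) / 2 * a + γ) (hψ₀ : sin ψ = 0) :
    deriv (deriv (fun θ => imPolar n γ s θ)) a = -s * (n - 1) * cos ψ * sin Φ := by
  obtain ⟨hadd, hsub⟩ := phases_of_half_angles hΦ hψ
  rw [deriv_deriv_angle, hadd, hsub, sin_add, sin_sub, hψ₀]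
  linear_combination (-n * sin Φ * cos ψ) * natCast_mul_pow_eq_self hs

theorem hessian_det_eq (hs : n * s ^ (n - 1) = 1) (hχ : χ = (n - 1) / 2 * a + δ)
    (hχ₀ : sin χ = 0) :
    deriv (deriv (fun r => imPolar n δ r a)) s * deriv (deriv (fun θ => imPolar n δ s θ)) a
      - deriv (fun θ => deriv (fun r => imPolar n δ r θ) s) a ^ 2 = -(n - 1) ^ 2 := by
  have hΦ : (n + 1) / 2 * a = (n + 1) / 2 * a := rfl
  rw [deriv_deriv_angle_eq hs hΦ hχ hχ₀, deriv_angle_deriv_radius_eq hs hΦ hχ hχ₀]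
  linear_combination (-((n - 1) * cos χ * sin ((n + 1) / 2 * a)))
      * mul_deriv_deriv_radius_eq hs hΦ hχ hχ₀
    - (n - 1) ^ 2 * (cos χ ^ 2 * sin_sq_add_cos_sq ((n + 1) / 2 * a) + sin_sq_add_cos_sq χ)
    + (n - 1) ^ 2 * sin χ * hχ₀

theorem bordered_hessian_eq (hs : n * s ^ (n - 1) = 1) (hΦ : Φ = (n + 1) / 2 * a)
    (hψ : ψ = (n - 1) / 2 * a + γ) (hχ : χ = (n - 1) / 2 * a + δ) (hχ₀ : sin χ = 0) :
    deriv (fun θ => imPolar n γ s θ) a ^ 2 * deriv (deriv (fun r => imPolar n δ r a)) s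
      - 2 * deriv (fun r => imPolar n γ r a) s * deriv (fun θ => imPolar n γ s θ) a
        * deriv (fun θ => deriv (fun r => imPolar n δ r θ) s) a
      + deriv (fun r => imPolar n γ r a) s ^ 2 * deriv (deriv (fun θ => imPolar n δ s θ)) a
      = 4 * s * (n - 1) * sin ψ ^ 2 * cos χ * sin Φ := by
  rw [deriv_radius_eq hs hΦ hψ, deriv_angle_eq hs hΦ hψ, deriv_angle_deriv_radius_eq hs hΦ hχ hχ₀,
    deriv_deriv_angle_eq hs hΦ hχ hχ₀]
  linear_combination (4 * s * sin Φ ^ 2 * sin ψ ^ 2) * mul_deriv_deriv_radius_eq hs hΦ hχ hχ₀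
    + (4 * s * (n - 1) * sin ψ ^ 2 * cos χ * sin Φ) * sin_sq_add_cos_sq Φ

end CriticalRadius

end imPolar

/-- `(x₁, x₂)` is the gradient of the first block of `Q / m`, `y` and `z` are the Hessians of the
two blocks of `c R̂` (the first one divided by `m`). -/
theorem det_hessian_eq_of_blocks {K : Type*} [Field K]
    {m c x₁ x₂ y₁₁ y₁₂ y₂₂ z₃₃ z₃₄ z₄₄ k₁ k₂ k₃ k₄ A B C D E F : K}
    (hk₁0 : k₁ ≠ 0) (hk₁ : k₁ = m * x₁) (hk₂ : k₂ = m * x₂)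
    (hA : A = c⁻¹ * (m * y₁₁) / k₁ ^ 2) (hB : B = c⁻¹ * (m * y₁₂) / k₁) (hC : C = c⁻¹ * (m * y₂₂))
    (hD : D = c⁻¹ * z₃₃) (hE : E = c⁻¹ * z₃₄) (hF : F = c⁻¹ * z₄₄) :
    Matrix.det
      !![k₂ ^ 2 * A - 2 * k₂ * B + C, k₃ * (k₂ * A - B), k₄ * (k₂ * A - B);
         k₃ * (k₂ * A - B), k₃ ^ 2 * A + D, k₃ * k₄ * A + E;
         k₄ * (k₂ * A - B), k₃ * k₄ * A + E, k₄ ^ 2 * A + F]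
      = m ^ 2 / (c ^ 3 * k₁ ^ 2) *
        (m * (x₂ ^ 2 * y₁₁ - 2 * x₁ * x₂ * y₁₂ + x₁ ^ 2 * y₂₂) * (z₃₃ * z₄₄ - z₃₄ ^ 2)
          + (y₁₁ * y₂₂ - y₁₂ ^ 2) * (k₄ ^ 2 * z₃₃ - 2 * k₃ * k₄ * z₃₄ + k₃ ^ 2 * z₄₄)) := by
  have hm : m ≠ 0 := left_ne_zero_of_mul (hk₁ ▸ hk₁0)
  have hx₁ : x₁ = k₁ / m := by rw [hk₁]; field_simp
  rw [Matrix.det_fin_three]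
  simp only [Matrix.of_apply, Matrix.cons_val', Matrix.cons_val_zero, Matrix.cons_val_one,
    Matrix.cons_val_two, Matrix.empty_val', Matrix.cons_val_fin_one, Matrix.head_cons,
    Matrix.tail_cons, Matrix.head_fin_const]
  subst hk₂ hA hB hC hD hE hF hx₁
  field_simp
  ring

theorem hessian_determinant_at_singular_point_general
    (p q : ℕ) (μ : ℂ)
    (u₀ v₀ : ℂ)
    (hu : (p : ℝ) * ‖u₀‖ ^ (p - 1) = 1)
    (hv : (q : ℝ) * ‖v₀‖ ^ (q - 1) = 1)
    (Q R Rhat : ℝ → ℝ → ℝ → ℝ → ℝ)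
    (hQ : ∀ r₁ θ₁ r₂ θ₂, Q r₁ θ₁ r₂ θ₂ =
      ‖μ‖ * r₁ ^ p * Real.cos (p * θ₁ + Complex.arg μ)
        + ‖μ‖ * r₁ * Real.cos (-θ₁ + Complex.arg μ)
        + r₂ ^ q * Real.cos (q * θ₂) + r₂ * Real.cos (-θ₂))
    (hR : ∀ r₁ θ₁ r₂ θ₂, R r₁ θ₁ r₂ θ₂ =
      ‖μ‖ * r₁ ^ p * Real.sin (p * θ₁ + Complex.arg μ)
        + ‖μ‖ * r₁ * Real.sin (-θ₁ + Complex.arg μ)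
        + r₂ ^ q * Real.sin (q * θ₂) + r₂ * Real.sin (-θ₂))
    (Θ₁ Θ₂ Θ₃ Θ₄ : ℝ)
    (hΘ₁ : Θ₁ = ((p : ℝ) + 1) / 2 * Complex.arg u₀)
    (hΘ₂ : Θ₂ = ((p : ℝ) - 1) / 2 * Complex.arg u₀ + Complex.arg μ)
    (hΘ₃ : Θ₃ = ((q : ℝ) + 1) / 2 * Complex.arg v₀)
    (hΘ₄ : Θ₄ = ((q : ℝ) - 1) / 2 * Complex.arg v₀)
    (κ : ℤ) (hκ : Θ₂ = Θ₄ + κ * Real.pi)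
    (hcos : Real.cos Θ₂ ≠ 0)
    (hRhat : ∀ r₁ θ₁ r₂ θ₂, Rhat r₁ θ₁ r₂ θ₂ =
      R r₁ θ₁ r₂ θ₂ - Real.tan Θ₂ * Q r₁ θ₁ r₂ θ₂)
    (k₁ k₂ k₃ k₄ : ℝ)
    (hk₁ : k₁ = deriv (fun r₁ => Q r₁ (Complex.arg u₀) (‖v₀‖) (Complex.arg v₀))
      (‖u₀‖))
    (hk₂ : k₂ = deriv (fun θ₁ => Q (‖u₀‖) θ₁ (‖v₀‖) (Complex.arg v₀))
      (Complex.arg u₀))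
    (hk₃ : k₃ = deriv (fun r₂ => Q (‖u₀‖) (Complex.arg u₀) r₂ (Complex.arg v₀))
      (‖v₀‖))
    (hk₄ : k₄ = deriv (fun θ₂ => Q (‖u₀‖) (Complex.arg u₀) (‖v₀‖) θ₂)
      (Complex.arg v₀))
    (hk₁0 : k₁ ≠ 0)
    (A B C D E F : ℝ)
    (hA : A = deriv (deriv (fun r₁ =>
        Rhat r₁ (Complex.arg u₀) (‖v₀‖) (Complex.arg v₀))) (‖u₀‖) / k₁ ^ 2)
    (hB : B = deriv (fun θ₁ =>
        deriv (fun r₁ => Rhat r₁ θ₁ (‖v₀‖) (Complex.arg v₀)) (‖u₀‖))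
        (Complex.arg u₀) / k₁)
    (hC : C = deriv (deriv (fun θ₁ =>
        Rhat (‖u₀‖) θ₁ (‖v₀‖) (Complex.arg v₀))) (Complex.arg u₀))
    (hD : D = deriv (deriv (fun r₂ =>
        Rhat (‖u₀‖) (Complex.arg u₀) r₂ (Complex.arg v₀))) (‖v₀‖))
    (hE : E = deriv (fun θ₂ =>
        deriv (fun r₂ => Rhat (‖u₀‖) (Complex.arg u₀) r₂ θ₂) (‖v₀‖))
        (Complex.arg v₀))
    (hF : F = deriv (deriv (fun θ₂ =>
        Rhat (‖u₀‖) (Complex.arg u₀) (‖v₀‖) θ₂)) (Complex.arg v₀))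
    (φ : ℝ)
    (hφ : φ = (-1 : ℝ) ^ κ * ((p : ℝ) - 1) * ‖v₀‖ * Real.sin Θ₃
      + ((q : ℝ) - 1) * ‖μ‖ * ‖u₀‖ * Real.sin Θ₁) :
    Matrix.det
      !![k₂ ^ 2 * A - 2 * k₂ * B + C, k₃ * (k₂ * A - B), k₄ * (k₂ * A - B);
         k₃ * (k₂ * A - B), k₃ ^ 2 * A + D, k₃ * k₄ * A + E;
         k₄ * (k₂ * A - B), k₃ * k₄ * A + E, k₄ ^ 2 * A + F]
      = -(1 / (k₁ ^ 2 * Real.cos Θ₂)) * (4 * ((p : ℝ) - 1) * ((q : ℝ) - 1)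
          * ‖μ‖ ^ 2) * φ := by
  obtain rfl : Rhat = fun r₁ θ₁ r₂ θ₂ => (cos Θ₂)⁻¹ *
      (‖μ‖ * imPolar p (Complex.arg μ - Θ₂) r₁ θ₁ + imPolar q (-Θ₂) r₂ θ₂) := by
    funext r₁ θ₁ r₂ θ₂
    rw [hRhat, hR, hQ, tan_eq_sin_div_cos]
    simp only [imPolar, sin_add, sin_sub, sin_neg, cos_add, cos_sub, cos_neg]
    field_simp
    ring
  obtain rfl : Q = fun r₁ θ₁ r₂ θ₂ =>
      ‖μ‖ * imPolar p (Complex.arg μ + π / 2) r₁ θ₁ + imPolar q (π / 2) r₂ θ₂ := by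
    funext r₁ θ₁ r₂ θ₂
    simp only [hQ, imPolar, ← add_assoc, sin_add_pi_div_two]
    ring
  simp only [deriv_add_const, deriv_const_add, deriv_const_mul_field,
    deriv_const_mul_field'] at hk₁ hk₂ hk₃ hk₄ hA hB hC hD hE hF
  have hψ₁ : Θ₂ + π / 2 = (p - 1) / 2 * Complex.arg u₀ + (Complex.arg μ + π / 2) := by
    rw [hΘ₂]; ring
  have hχ₁ : 0 = (p - 1) / 2 * Complex.arg u₀ + (Complex.arg μ - Θ₂) := by linarith
  have hψ₂ : Θ₄ + π / 2 = (q - 1) / 2 * Complex.arg v₀ + π / 2 := by rw [hΘ₄]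
  have hχ₂ : -(κ * π) = (q - 1) / 2 * Complex.arg v₀ + -Θ₂ := by linarith
  have hχ₂₀ : sin (-(κ * π)) = 0 := by rw [sin_neg, sin_int_mul_pi, neg_zero]
  have hcos₂₄ : cos Θ₄ ^ 2 = cos Θ₂ ^ 2 := by
    rw [hκ, cos_add_int_mul_pi, mul_pow, ← sq_abs ((-1 : ℝ) ^ κ), abs_neg_one_zpow, one_pow,
      one_mul]
  rw [det_hessian_eq_of_blocks hk₁0 hk₁ hk₂ hA hB hC hD hE hF, hk₃, hk₄,
    imPolar.bordered_hessian_eq hu hΘ₁ hψ₁ hχ₁ sin_zero, imPolar.hessian_det_eq hu hχ₁ sin_zero,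
    imPolar.bordered_hessian_eq hv hΘ₃ hψ₂ hχ₂ hχ₂₀, imPolar.hessian_det_eq hv hχ₂ hχ₂₀,
    sin_add_pi_div_two, sin_add_pi_div_two, hcos₂₄, cos_zero, cos_neg, cos_int_mul_pi, hφ]
  field_simp
  ring

/-- Proposition 3.9: the determinant of the Hessian `H` at a singular
point with `k₁ ≠ 0` is `-(4(p-1)(q-1)|μ|²/(k₁² cos Θ₂)) φ`, where
`φ = (-1)^κ (p-1)|v₀| sin Θ₃ + (q-1)|μ||u₀| sin Θ₁`. -/
theorem hessian_determinant_at_singular_point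
    (p q : ℕ) (hp : 2 ≤ p) (hq : 2 ≤ q) (μ : ℂ) (hμ : μ ≠ 0)
    (u₀ v₀ : ℂ) (hu₀ : u₀ ≠ 0) (hv₀ : v₀ ≠ 0)
    (hu : (p : ℝ) * ‖u₀‖ ^ (p - 1) = 1)
    (hv : (q : ℝ) * ‖v₀‖ ^ (q - 1) = 1)
    (Q R Rhat : ℝ → ℝ → ℝ → ℝ → ℝ)
    (hQ : ∀ r₁ θ₁ r₂ θ₂, Q r₁ θ₁ r₂ θ₂ =
      ‖μ‖ * r₁ ^ p * Real.cos (p * θ₁ + Complex.arg μ)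
        + ‖μ‖ * r₁ * Real.cos (-θ₁ + Complex.arg μ)
        + r₂ ^ q * Real.cos (q * θ₂) + r₂ * Real.cos (-θ₂))
    (hR : ∀ r₁ θ₁ r₂ θ₂, R r₁ θ₁ r₂ θ₂ =
      ‖μ‖ * r₁ ^ p * Real.sin (p * θ₁ + Complex.arg μ)
        + ‖μ‖ * r₁ * Real.sin (-θ₁ + Complex.arg μ)
        + r₂ ^ q * Real.sin (q * θ₂) + r₂ * Real.sin (-θ₂))
    (Θ₁ Θ₂ Θ₃ Θ₄ : ℝ)
    (hΘ₁ : Θ₁ = ((p : ℝ) + 1) / 2 * Complex.arg u₀)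
    (hΘ₂ : Θ₂ = ((p : ℝ) - 1) / 2 * Complex.arg u₀ + Complex.arg μ)
    (hΘ₃ : Θ₃ = ((q : ℝ) + 1) / 2 * Complex.arg v₀)
    (hΘ₄ : Θ₄ = ((q : ℝ) - 1) / 2 * Complex.arg v₀)
    (κ : ℤ) (hκ : Θ₂ = Θ₄ + κ * Real.pi)
    (hcos : Real.cos Θ₂ ≠ 0)
    (hRhat : ∀ r₁ θ₁ r₂ θ₂, Rhat r₁ θ₁ r₂ θ₂ =
      R r₁ θ₁ r₂ θ₂ - Real.tan Θ₂ * Q r₁ θ₁ r₂ θ₂)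
    (k₁ k₂ k₃ k₄ : ℝ)
    (hk₁ : k₁ = deriv (fun r₁ => Q r₁ (Complex.arg u₀) (‖v₀‖) (Complex.arg v₀))
      (‖u₀‖))
    (hk₂ : k₂ = deriv (fun θ₁ => Q (‖u₀‖) θ₁ (‖v₀‖) (Complex.arg v₀))
      (Complex.arg u₀))
    (hk₃ : k₃ = deriv (fun r₂ => Q (‖u₀‖) (Complex.arg u₀) r₂ (Complex.arg v₀))
      (‖v₀‖))
    (hk₄ : k₄ = deriv (fun θ₂ => Q (‖u₀‖) (Complex.arg u₀) (‖v₀‖) θ₂)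
      (Complex.arg v₀))
    (hk₁0 : k₁ ≠ 0)
    (A B C D E F : ℝ)
    (hA : A = deriv (deriv (fun r₁ =>
        Rhat r₁ (Complex.arg u₀) (‖v₀‖) (Complex.arg v₀))) (‖u₀‖) / k₁ ^ 2)
    (hB : B = deriv (fun θ₁ =>
        deriv (fun r₁ => Rhat r₁ θ₁ (‖v₀‖) (Complex.arg v₀)) (‖u₀‖))
        (Complex.arg u₀) / k₁)
    (hC : C = deriv (deriv (fun θ₁ =>
        Rhat (‖u₀‖) θ₁ (‖v₀‖) (Complex.arg v₀))) (Complex.arg u₀))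
    (hD : D = deriv (deriv (fun r₂ =>
        Rhat (‖u₀‖) (Complex.arg u₀) r₂ (Complex.arg v₀))) (‖v₀‖))
    (hE : E = deriv (fun θ₂ =>
        deriv (fun r₂ => Rhat (‖u₀‖) (Complex.arg u₀) r₂ θ₂) (‖v₀‖))
        (Complex.arg v₀))
    (hF : F = deriv (deriv (fun θ₂ =>
        Rhat (‖u₀‖) (Complex.arg u₀) (‖v₀‖) θ₂)) (Complex.arg v₀))
    (φ : ℝ)
    (hφ : φ = (-1 : ℝ) ^ κ * ((p : ℝ) - 1) * ‖v₀‖ * Real.sin Θ₃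
      + ((q : ℝ) - 1) * ‖μ‖ * ‖u₀‖ * Real.sin Θ₁) :
    Matrix.det
      !![k₂ ^ 2 * A - 2 * k₂ * B + C, k₃ * (k₂ * A - B), k₄ * (k₂ * A - B);
         k₃ * (k₂ * A - B), k₃ ^ 2 * A + D, k₃ * k₄ * A + E;
         k₄ * (k₂ * A - B), k₃ * k₄ * A + E, k₄ ^ 2 * A + F]
      = -(1 / (k₁ ^ 2 * Real.cos Θ₂)) * (4 * ((p : ℝ) - 1) * ((q : ℝ) - 1)
          * ‖μ‖ ^ 2) * φ :=
  hessian_determinant_at_singular_point_general p q μ u₀ v₀ hu hv Q R Rhat hQ hR Θ₁ Θ₂ Θ₃ Θ₄ hΘ₁ hΘ₂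
    hΘ₃ hΘ₄ κ hκ hcos hRhat k₁ k₂ k₃ k₄ hk₁ hk₂ hk₃ hk₄ hk₁0 A B C D E F hA hB hC hD hE hF φ hφ
end

section
/- Let p, q ≥ 2 be integers, μ ∈ ℂ ∖ {0}, and u₀, v₀ ∈ ℂ ∖ {0} with p·|u₀|^{p−1} = 1, q·|v₀|^{q−1} = 1, and Θ₂ = Θ₄ + κπ for some integer κ; assume cos Θ₂ ≠ 0, k₁ ≠ 0, and φ = 0 where φ = (−1)^κ (p−1)|v₀| sin Θ₃ + (q−1)|μ||u₀| sin Θ₁. With R̂ = R − tan(Θ₂)·Q and A = R̂_{r₁r₁}(x₀)/k₁², B = R̂_{r₁θ₁}(x₀)/k₁, C = R̂_{θ₁θ₁}(x₀), D = R̂_{r₂r₂}(x₀), E = R̂_{r₂θ₂}(x₀), the following identities hold: (i) k₂²A − 2k₂B + C = (4(p−1)|μ|³|u₀| sin Θ₁ cos Θ₂)/k₁²; (ii) k₃²(AC − B²) + D·(k₂²A − 2k₂B + C) = −4(p−1)²|μ|²/k₁²; (iii) −k₃k₄(k₂A − B)² + (k₃k₄A + E)(k₂²A − 2k₂B + C)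 = 0. -/
/-!
With `P = μ (u ^ p + conj u) + v ^ q + conj v`, both `Q = Re P` and `cos Θ₂ • R̂ = Im (e^{-iΘ₂} P)`
split into one term in `u` and one in `v`, each of the form `Im (e^{iν} (w ^ n + conj w))`.
On the circle `n |w| ^ (n - 1) = 1` the polar derivatives of such a term are sum-to-product
expressions in the half angles `S = (n + 1) θ / 2` and `T = (n - 1) θ / 2 + ν`. For the terms of
`R̂` the phase `T` vanishes (for the `v`-term because `Θ₂ = Θ₄ + κπ`, up to the sign `(-1) ^ κ`),
so all of `k₁, …, k₄, A, …, E` become monomials in `sin Θᵢ, cos Θᵢ`, and (i)–(iii) reduce to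
polynomial identities modulo `sin² + cos² = 1` and `φ = 0`.
-/

open Real
open Complex (arg)

/-- `Im (e^{iν} (w ^ n + conj w))` for `w = r e^{iθ}`. -/
noncomputable def polarTerm (n : ℕ) (ν r θ : ℝ) : ℝ :=
  r ^ n * sin (n * θ + ν) + r * sin (-θ + ν)

namespace polarTerm

variable (n : ℕ) (ν r θ : ℝ)

theorem add_pi_div_two :
    polarTerm n (ν + π / 2) r θ = r ^ n * cos (n * θ + ν) + r * cos (-θ + ν) := by
  simp only [polarTerm, ← add_assoc, sin_add_pi_div_two]

theorem pi_div_two : polarTerm n (π / 2) r θ = r ^ n * cos (n * θ) + r * cos (-θ) := by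
  simpa using add_pi_div_two n 0 r θ

theorem sub_int_mul_pi (κ : ℤ) :
    polarTerm n (ν - κ * π) r θ = (-1) ^ κ * polarTerm n ν r θ := by
  simp only [polarTerm, ← add_sub_assoc, sin_sub_int_mul_pi]
  ring

theorem sub_tan_mul_add_pi_div_two {ψ : ℝ} (hψ : cos ψ ≠ 0) :
    polarTerm n ν r θ - tan ψ * polarTerm n (ν + π / 2) r θ
      = polarTerm n (ν - ψ) r θ / cos ψ := by
  rw [add_pi_div_two, tan_eq_sin_div_cos]
  simp only [polarTerm, ← add_sub_assoc, sin_sub]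
  field_simp
  ring

theorem hasDerivAt_radius :
    HasDerivAt (fun r => polarTerm n ν r θ)
      (n * r ^ (n - 1) * sin (n * θ + ν) + sin (-θ + ν)) r := by
  unfold polarTerm
  exact (((hasDerivAt_pow n r).mul_const _).add
    ((hasDerivAt_id' r).mul_const _)).congr_deriv (by ring)

theorem hasDerivAt_angle :
    HasDerivAt (fun θ => polarTerm n ν r θ)
      (n * r ^ n * cos (n * θ + ν) - r * cos (-θ + ν)) θ := by
  unfold polarTerm
  have h₁ := (((hasDerivAt_id' θ).const_mul (n : ℝ)).add_const ν).sin.const_mul (r ^ n)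
  have h₂ := ((hasDerivAt_neg' θ).add_const ν).sin.const_mul r
  exact (h₁.add h₂).congr_deriv (by ring)

theorem deriv_radius :
    deriv (fun r => polarTerm n ν r θ)
      = fun r => n * r ^ (n - 1) * sin (n * θ + ν) + sin (-θ + ν) :=
  funext fun r => (hasDerivAt_radius n ν r θ).deriv

theorem deriv_angle :
    deriv (fun θ => polarTerm n ν r θ)
      = fun θ => n * r ^ n * cos (n * θ + ν) - r * cos (-θ + ν) :=
  funext fun θ => (hasDerivAt_angle n ν r θ).deriv

theorem deriv_deriv_radius :
    deriv (deriv (fun r => polarTerm n ν r θ)) r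
      = n * ((n - 1 : ℕ) * r ^ (n - 1 - 1)) * sin (n * θ + ν) := by
  rw [deriv_radius]
  exact (((hasDerivAt_pow (n - 1) r).const_mul (n : ℝ)).mul_const _).add_const _ |>.deriv

theorem deriv_angle_deriv_radius :
    deriv (fun θ => deriv (fun r => polarTerm n ν r θ) r) θ
      = n ^ 2 * r ^ (n - 1) * cos (n * θ + ν) - cos (-θ + ν) := by
  simp only [deriv_radius]
  have h₁ := (((hasDerivAt_id' θ).const_mul (n : ℝ)).add_const ν).sin.const_mul
    (n * r ^ (n - 1))
  have h₂ := ((hasDerivAt_neg' θ).add_const ν).sin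
  exact (h₁.add h₂).deriv.trans (by ring)

theorem deriv_deriv_angle :
    deriv (deriv (fun θ => polarTerm n ν r θ)) θ
      = -(n ^ 2 * r ^ n * sin (n * θ + ν)) - r * sin (-θ + ν) := by
  rw [deriv_angle]
  have h₁ := (((hasDerivAt_id' θ).const_mul (n : ℝ)).add_const ν).cos.const_mul (n * r ^ n)
  have h₂ := ((hasDerivAt_neg' θ).add_const ν).cos.const_mul r
  exact (h₁.sub h₂).deriv.trans (by ring)

variable {n ν r θ}

theorem pow_eq_of_critical (hr : n * r ^ (n - 1) = 1) : r ^ n = r / n := by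
  obtain ⟨k, rfl⟩ : ∃ k, n = k + 1 :=
    Nat.exists_eq_succ_of_ne_zero (by rintro rfl; simp at hr)
  rw [Nat.add_sub_cancel] at hr
  rw [eq_div_iff (by positivity), pow_succ]
  linear_combination r * hr

theorem mul_mul_pow_eq_of_critical (hr : n * r ^ (n - 1) = 1) :
    n * ((n - 1 : ℕ) * r ^ (n - 1 - 1)) = (n - 1) / r := by
  rcases n with _ | _ | n
  · simp at hr
  · simp
  · have hr0 : r ≠ 0 := by rintro rfl; simp at hr
    simp only [Nat.add_sub_cancel] at hr ⊢
    rw [eq_div_iff hr0, pow_succ] at *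
    push_cast at hr ⊢
    linear_combination (n + 1 : ℝ) * hr

variable {S T : ℝ}

theorem add_eq_half_angles (hS : ((n : ℝ) + 1) / 2 * θ = S)
    (hT : ((n : ℝ) - 1) / 2 * θ + ν = T) : n * θ + ν = S + T ∧ -θ + ν = T - S := by
  subst hS hT
  constructor <;> ring

theorem deriv_radius_of_critical (hr : n * r ^ (n - 1) = 1)
    (hS : ((n : ℝ) + 1) / 2 * θ = S) (hT : ((n : ℝ) - 1) / 2 * θ + ν = T) :
    deriv (fun r => polarTerm n ν r θ) r = 2 * sin T * cos S := by
  obtain ⟨hsum, hdiff⟩ := add_eq_half_angles hS hT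
  rw [(hasDerivAt_radius n ν r θ).deriv, hr, one_mul, hsum, hdiff, sin_add, sin_sub]
  ring

theorem deriv_angle_of_critical (hr : n * r ^ (n - 1) = 1)
    (hS : ((n : ℝ) + 1) / 2 * θ = S) (hT : ((n : ℝ) - 1) / 2 * θ + ν = T) :
    deriv (fun θ => polarTerm n ν r θ) θ = -(2 * r * sin S * sin T) := by
  obtain ⟨hsum, hdiff⟩ := add_eq_half_angles hS hT
  have hn : (n : ℝ) ≠ 0 := by rintro h; simp [h] at hr
  rw [(hasDerivAt_angle n ν r θ).deriv, pow_eq_of_critical hr, hsum, hdiff, cos_add, cos_sub]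
  field_simp
  ring

theorem deriv_deriv_radius_of_critical (hr : n * r ^ (n - 1) = 1)
    (hS : ((n : ℝ) + 1) / 2 * θ = S) (hT : ((n : ℝ) - 1) / 2 * θ + ν = 0) :
    deriv (deriv (fun r => polarTerm n ν r θ)) r = (n - 1) / r * sin S := by
  obtain ⟨hsum, -⟩ := add_eq_half_angles hS hT
  rw [deriv_deriv_radius, mul_mul_pow_eq_of_critical hr, hsum, add_zero]

theorem deriv_angle_deriv_radius_of_critical (hr : n * r ^ (n - 1) = 1)
    (hS : ((n : ℝ) + 1) / 2 * θ = S) (hT : ((n : ℝ) - 1) / 2 * θ + ν = 0) :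
    deriv (fun θ => deriv (fun r => polarTerm n ν r θ) r) θ = (n - 1) * cos S := by
  obtain ⟨hsum, hdiff⟩ := add_eq_half_angles hS hT
  rw [deriv_angle_deriv_radius, hsum, hdiff, add_zero, zero_sub, cos_neg]
  linear_combination (n * cos S) * hr

theorem deriv_deriv_angle_of_critical (hr : n * r ^ (n - 1) = 1)
    (hS : ((n : ℝ) + 1) / 2 * θ = S) (hT : ((n : ℝ) - 1) / 2 * θ + ν = 0) :
    deriv (deriv (fun θ => polarTerm n ν r θ)) θ = -((n - 1) * r * sin S) := by
  obtain ⟨hsum, hdiff⟩ := add_eq_half_angles hS hT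
  have hn : (n : ℝ) ≠ 0 := by rintro h; simp [h] at hr
  rw [deriv_deriv_angle, pow_eq_of_critical hr, hsum, hdiff, add_zero, zero_sub, sin_neg]
  field_simp
  ring

end polarTerm

section Expansion

variable {p q : ℕ} {m ν : ℝ} {Q R Rhat : ℝ → ℝ → ℝ → ℝ → ℝ}

theorem re_expansion_eq_polarTerm
    (hQ : ∀ r₁ θ₁ r₂ θ₂, Q r₁ θ₁ r₂ θ₂ = m * r₁ ^ p * cos (p * θ₁ + ν) + m * r₁ * cos (-θ₁ + ν)
      + r₂ ^ q * cos (q * θ₂) + r₂ * cos (-θ₂)) :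
    Q = fun r₁ θ₁ r₂ θ₂ => m * polarTerm p (ν + π / 2) r₁ θ₁ + polarTerm q (π / 2) r₂ θ₂ := by
  funext r₁ θ₁ r₂ θ₂
  rw [hQ, polarTerm.add_pi_div_two, polarTerm.pi_div_two]
  ring

theorem im_sub_tan_mul_re_eq_polarTerm {ψ ψ' : ℝ} {κ : ℤ}
    (hQ : ∀ r₁ θ₁ r₂ θ₂, Q r₁ θ₁ r₂ θ₂ = m * r₁ ^ p * cos (p * θ₁ + ν) + m * r₁ * cos (-θ₁ + ν)
      + r₂ ^ q * cos (q * θ₂) + r₂ * cos (-θ₂))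
    (hR : ∀ r₁ θ₁ r₂ θ₂, R r₁ θ₁ r₂ θ₂ = m * r₁ ^ p * sin (p * θ₁ + ν) + m * r₁ * sin (-θ₁ + ν)
      + r₂ ^ q * sin (q * θ₂) + r₂ * sin (-θ₂))
    (hRhat : ∀ r₁ θ₁ r₂ θ₂, Rhat r₁ θ₁ r₂ θ₂ = R r₁ θ₁ r₂ θ₂ - tan ψ * Q r₁ θ₁ r₂ θ₂)
    (hψ : cos ψ ≠ 0) (hκ : ψ = ψ' + κ * π) :
    Rhat = fun r₁ θ₁ r₂ θ₂ => m / cos ψ * polarTerm p (ν - ψ) r₁ θ₁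
      + (-1) ^ κ / cos ψ * polarTerm q (-ψ') r₂ θ₂ := by
  funext r₁ θ₁ r₂ θ₂
  have h₁ := polarTerm.sub_tan_mul_add_pi_div_two p ν r₁ θ₁ hψ
  have h₂ := polarTerm.sub_tan_mul_add_pi_div_two q 0 r₂ θ₂ hψ
  have h₃ := polarTerm.sub_int_mul_pi q (-ψ') r₂ θ₂ κ
  rw [polarTerm.add_pi_div_two] at h₁
  rw [zero_add, zero_sub, polarTerm.pi_div_two] at h₂
  rw [show -ψ' - κ * π = -ψ by linarith] at h₃
  rw [hRhat, hR, hQ]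
  simp only [polarTerm, add_zero] at h₁ h₂ h₃ ⊢
  linear_combination m * h₁ + h₂ + h₃ / cos ψ

end Expansion

theorem cusp_identities_of_closed_forms
    {p q m a b ε s₁ c₁ c₂ s₃ c₃ k₁ k₂ k₃ k₄ A B C D E : ℝ}
    (ha : a ≠ 0) (hb : b ≠ 0) (hc₂ : c₂ ≠ 0) (hk₁0 : k₁ ≠ 0) (hε : ε ^ 2 = 1)
    (h₁ : s₁ ^ 2 + c₁ ^ 2 = 1) (h₃ : s₃ ^ 2 + c₃ ^ 2 = 1)
    (hφ : ε * (p - 1) * b * s₃ + (q - 1) * m * a * s₁ = 0)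
    (hk₁ : k₁ = m * (2 * c₂ * c₁)) (hk₂ : k₂ = m * -(2 * a * s₁ * c₂))
    (hk₃ : k₃ = 2 * (ε * c₂) * c₃) (hk₄ : k₄ = -(2 * b * s₃ * (ε * c₂)))
    (hA : A = m / c₂ * ((p - 1) / a * s₁) / k₁ ^ 2)
    (hB : B = m / c₂ * ((p - 1) * c₁) / k₁)
    (hC : C = m / c₂ * -((p - 1) * a * s₁))
    (hD : D = ε / c₂ * ((q - 1) / b * s₃))
    (hE : E = ε / c₂ * ((q - 1) * c₃)) :
    k₂ ^ 2 * A - 2 * k₂ * B + C = 4 * (p - 1) * m ^ 3 * a * s₁ * c₂ / k₁ ^ 2 ∧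
    k₃ ^ 2 * (A * C - B ^ 2) + D * (k₂ ^ 2 * A - 2 * k₂ * B + C)
        = -(4 * (p - 1) ^ 2 * m ^ 2) / k₁ ^ 2 ∧
    -(k₃ * k₄) * (k₂ * A - B) ^ 2 + (k₃ * k₄ * A + E) * (k₂ ^ 2 * A - 2 * k₂ * B + C) = 0 := by
  have hΔ : k₂ ^ 2 * A - 2 * k₂ * B + C = 4 * (p - 1) * m ^ 3 * a * s₁ * c₂ / k₁ ^ 2 := by
    rw [hA, hB, hC, hk₂]
    field_simp
    rw [hk₁]
    linear_combination 4 * m ^ 3 * s₁ * (p - 1) * c₂ ^ 2 * h₁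
  have hdisc : A * C - B ^ 2 = -(m ^ 2 * (p - 1) ^ 2 / (c₂ ^ 2 * k₁ ^ 2)) := by
    rw [hA, hB, hC]
    field_simp
    linear_combination (-(m ^ 2 * (p - 1) ^ 2)) * h₁
  have hk₂AB : k₂ * A - B = -(2 * m ^ 2 * (p - 1) / k₁ ^ 2) := by
    rw [hA, hB, hk₂]
    field_simp
    rw [hk₁]
    linear_combination (-(2 * m ^ 2 * (p - 1))) * c₂ * h₁
  refine ⟨hΔ, ?_, ?_⟩
  · rw [hdisc, hΔ, hk₃, hD]
    field_simp
    linear_combination 4 * ε * m ^ 2 * (p - 1) * s₃ * hφ - 4 * m ^ 2 * (p - 1) ^ 2 * b * ε ^ 2 * h₃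
      - 4 * m ^ 2 * (p - 1) ^ 2 * b * hε
  · rw [hk₂AB, hΔ, hk₃, hk₄, hE, hA]
    field_simp
    rw [hk₁]
    linear_combination 16 * ε * c₃ * m ^ 4 * (p - 1) * c₂ ^ 2 * c₁ ^ 2 * hφ
      - 16 * ε ^ 2 * c₃ * m ^ 4 * (p - 1) ^ 2 * c₂ ^ 2 * b * s₃ * h₁

theorem identities_at_cusp_candidate_general
    (p q : ℕ) (μ : ℂ)
    (u₀ v₀ : ℂ) (hu₀ : u₀ ≠ 0) (hv₀ : v₀ ≠ 0)
    (hu : (p : ℝ) * ‖u₀‖ ^ (p - 1) = 1)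
    (hv : (q : ℝ) * ‖v₀‖ ^ (q - 1) = 1)
    (Q R Rhat : ℝ → ℝ → ℝ → ℝ → ℝ)
    (hQ : ∀ r₁ θ₁ r₂ θ₂, Q r₁ θ₁ r₂ θ₂ =
      ‖μ‖ * r₁ ^ p * Real.cos (p * θ₁ + Complex.arg μ)
        + ‖μ‖ * r₁ * Real.cos (-θ₁ + Complex.arg μ)
        + r₂ ^ q * Real.cos (q * θ₂) + r₂ * Real.cos (-θ₂))
    (hR : ∀ r₁ θ₁ r₂ θ₂, R r₁ θ₁ r₂ θ₂ =
      ‖μ‖ * r₁ ^ p * Real.sin (p * θ₁ + Complex.arg μ)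
        + ‖μ‖ * r₁ * Real.sin (-θ₁ + Complex.arg μ)
        + r₂ ^ q * Real.sin (q * θ₂) + r₂ * Real.sin (-θ₂))
    (Θ₁ Θ₂ Θ₃ Θ₄ : ℝ)
    (hΘ₁ : Θ₁ = ((p : ℝ) + 1) / 2 * Complex.arg u₀)
    (hΘ₂ : Θ₂ = ((p : ℝ) - 1) / 2 * Complex.arg u₀ + Complex.arg μ)
    (hΘ₃ : Θ₃ = ((q : ℝ) + 1) / 2 * Complex.arg v₀)
    (hΘ₄ : Θ₄ = ((q : ℝ) - 1) / 2 * Complex.arg v₀)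
    (κ : ℤ) (hκ : Θ₂ = Θ₄ + κ * Real.pi)
    (hcos : Real.cos Θ₂ ≠ 0)
    (hRhat : ∀ r₁ θ₁ r₂ θ₂, Rhat r₁ θ₁ r₂ θ₂ =
      R r₁ θ₁ r₂ θ₂ - Real.tan Θ₂ * Q r₁ θ₁ r₂ θ₂)
    (k₁ k₂ k₃ k₄ : ℝ)
    (hk₁ : k₁ = deriv (fun r₁ => Q r₁ (Complex.arg u₀) (‖v₀‖) (Complex.arg v₀))
      (‖u₀‖))
    (hk₂ : k₂ = deriv (fun θ₁ => Q (‖u₀‖) θ₁ (‖v₀‖) (Complex.arg v₀))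
      (Complex.arg u₀))
    (hk₃ : k₃ = deriv (fun r₂ => Q (‖u₀‖) (Complex.arg u₀) r₂ (Complex.arg v₀))
      (‖v₀‖))
    (hk₄ : k₄ = deriv (fun θ₂ => Q (‖u₀‖) (Complex.arg u₀) (‖v₀‖) θ₂)
      (Complex.arg v₀))
    (hk₁0 : k₁ ≠ 0)
    (φ : ℝ)
    (hφdef : φ = (-1 : ℝ) ^ κ * ((p : ℝ) - 1) * ‖v₀‖ * Real.sin Θ₃
      + ((q : ℝ) - 1) * ‖μ‖ * ‖u₀‖ * Real.sin Θ₁)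
    (hφ : φ = 0)
    (A B C D E : ℝ)
    (hA : A = deriv (deriv (fun r₁ =>
        Rhat r₁ (Complex.arg u₀) (‖v₀‖) (Complex.arg v₀))) (‖u₀‖) / k₁ ^ 2)
    (hB : B = deriv (fun θ₁ =>
        deriv (fun r₁ => Rhat r₁ θ₁ (‖v₀‖) (Complex.arg v₀)) (‖u₀‖))
        (Complex.arg u₀) / k₁)
    (hC : C = deriv (deriv (fun θ₁ =>
        Rhat (‖u₀‖) θ₁ (‖v₀‖) (Complex.arg v₀))) (Complex.arg u₀))
    (hD : D = deriv (deriv (fun r₂ =>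
        Rhat (‖u₀‖) (Complex.arg u₀) r₂ (Complex.arg v₀))) (‖v₀‖))
    (hE : E = deriv (fun θ₂ =>
        deriv (fun r₂ => Rhat (‖u₀‖) (Complex.arg u₀) r₂ θ₂) (‖v₀‖))
        (Complex.arg v₀)) :
    k₂ ^ 2 * A - 2 * k₂ * B + C
        = 4 * ((p : ℝ) - 1) * ‖μ‖ ^ 3 * ‖u₀‖ * Real.sin Θ₁
            * Real.cos Θ₂ / k₁ ^ 2 ∧
    k₃ ^ 2 * (A * C - B ^ 2) + D * (k₂ ^ 2 * A - 2 * k₂ * B + C)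
        = -(4 * ((p : ℝ) - 1) ^ 2 * ‖μ‖ ^ 2) / k₁ ^ 2 ∧
    -(k₃ * k₄) * (k₂ * A - B) ^ 2 + (k₃ * k₄ * A + E) * (k₂ ^ 2 * A - 2 * k₂ * B + C)
        = 0 := by
  have ha : ‖u₀‖ ≠ 0 := norm_ne_zero_iff.mpr hu₀
  have hb : ‖v₀‖ ≠ 0 := norm_ne_zero_iff.mpr hv₀
  have hε : ((-1 : ℝ) ^ κ) ^ 2 = 1 := by
    rw [← zpow_natCast, ← zpow_mul, mul_comm, zpow_mul]; norm_num
  have hc₄ : cos Θ₄ = (-1) ^ κ * cos Θ₂ := by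
    rw [show Θ₄ = Θ₂ - κ * π by linarith, cos_sub_int_mul_pi]
  obtain rfl := im_sub_tan_mul_re_eq_polarTerm hQ hR hRhat hcos hκ
  obtain rfl := re_expansion_eq_polarTerm hQ
  have hT₁ : ((p : ℝ) - 1) / 2 * arg u₀ + (arg μ + π / 2) = Θ₂ + π / 2 := by rw [hΘ₂]; ring
  have hT₂ : ((p : ℝ) - 1) / 2 * arg u₀ + (arg μ - Θ₂) = 0 := by rw [hΘ₂]; ring
  have hT₃ : ((q : ℝ) - 1) / 2 * arg v₀ + π / 2 = Θ₄ + π / 2 := by rw [hΘ₄]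
  have hT₄ : ((q : ℝ) - 1) / 2 * arg v₀ + -Θ₄ = 0 := by rw [hΘ₄]; ring
  simp only [deriv_add_const', deriv_const_add', deriv_const_mul_field', deriv_add_const,
    deriv_const_add, deriv_const_mul_field,
    polarTerm.deriv_radius_of_critical hu hΘ₁.symm hT₁,
    polarTerm.deriv_angle_of_critical hu hΘ₁.symm hT₁,
    polarTerm.deriv_radius_of_critical hv hΘ₃.symm hT₃,
    polarTerm.deriv_angle_of_critical hv hΘ₃.symm hT₃,
    polarTerm.deriv_deriv_radius_of_critical hu hΘ₁.symm hT₂,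
    polarTerm.deriv_angle_deriv_radius_of_critical hu hΘ₁.symm hT₂,
    polarTerm.deriv_deriv_angle_of_critical hu hΘ₁.symm hT₂,
    polarTerm.deriv_deriv_radius_of_critical hv hΘ₃.symm hT₄,
    polarTerm.deriv_angle_deriv_radius_of_critical hv hΘ₃.symm hT₄,
    sin_add_pi_div_two, hc₄] at hk₁ hk₂ hk₃ hk₄ hA hB hC hD hE
  exact cusp_identities_of_closed_forms ha hb hcos hk₁0 hε (sin_sq_add_cos_sq Θ₁)
    (sin_sq_add_cos_sq Θ₃) (hφdef ▸ hφ) hk₁ hk₂ hk₃ hk₄ hA hB hC hD hE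

/-- identities from Lemma 3.11: at a singular point with `k₁ ≠ 0`,
`cos Θ₂ ≠ 0` and `φ = 0`, the quantities `A, ..., E` built from the second
derivatives of `R̂ = R - tan(Θ₂) Q` satisfy the three identities (i)–(iii). -/
theorem identities_at_cusp_candidate
    (p q : ℕ) (hp : 2 ≤ p) (hq : 2 ≤ q) (μ : ℂ) (hμ : μ ≠ 0)
    (u₀ v₀ : ℂ) (hu₀ : u₀ ≠ 0) (hv₀ : v₀ ≠ 0)
    (hu : (p : ℝ) * ‖u₀‖ ^ (p - 1) = 1)
    (hv : (q : ℝ) * ‖v₀‖ ^ (q - 1) = 1)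
    (Q R Rhat : ℝ → ℝ → ℝ → ℝ → ℝ)
    (hQ : ∀ r₁ θ₁ r₂ θ₂, Q r₁ θ₁ r₂ θ₂ =
      ‖μ‖ * r₁ ^ p * Real.cos (p * θ₁ + Complex.arg μ)
        + ‖μ‖ * r₁ * Real.cos (-θ₁ + Complex.arg μ)
        + r₂ ^ q * Real.cos (q * θ₂) + r₂ * Real.cos (-θ₂))
    (hR : ∀ r₁ θ₁ r₂ θ₂, R r₁ θ₁ r₂ θ₂ =
      ‖μ‖ * r₁ ^ p * Real.sin (p * θ₁ + Complex.arg μ)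
        + ‖μ‖ * r₁ * Real.sin (-θ₁ + Complex.arg μ)
        + r₂ ^ q * Real.sin (q * θ₂) + r₂ * Real.sin (-θ₂))
    (Θ₁ Θ₂ Θ₃ Θ₄ : ℝ)
    (hΘ₁ : Θ₁ = ((p : ℝ) + 1) / 2 * Complex.arg u₀)
    (hΘ₂ : Θ₂ = ((p : ℝ) - 1) / 2 * Complex.arg u₀ + Complex.arg μ)
    (hΘ₃ : Θ₃ = ((q : ℝ) + 1) / 2 * Complex.arg v₀)
    (hΘ₄ : Θ₄ = ((q : ℝ) - 1) / 2 * Complex.arg v₀)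
    (κ : ℤ) (hκ : Θ₂ = Θ₄ + κ * Real.pi)
    (hcos : Real.cos Θ₂ ≠ 0)
    (hRhat : ∀ r₁ θ₁ r₂ θ₂, Rhat r₁ θ₁ r₂ θ₂ =
      R r₁ θ₁ r₂ θ₂ - Real.tan Θ₂ * Q r₁ θ₁ r₂ θ₂)
    (k₁ k₂ k₃ k₄ : ℝ)
    (hk₁ : k₁ = deriv (fun r₁ => Q r₁ (Complex.arg u₀) (‖v₀‖) (Complex.arg v₀))
      (‖u₀‖))
    (hk₂ : k₂ = deriv (fun θ₁ => Q (‖u₀‖) θ₁ (‖v₀‖) (Complex.arg v₀))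
      (Complex.arg u₀))
    (hk₃ : k₃ = deriv (fun r₂ => Q (‖u₀‖) (Complex.arg u₀) r₂ (Complex.arg v₀))
      (‖v₀‖))
    (hk₄ : k₄ = deriv (fun θ₂ => Q (‖u₀‖) (Complex.arg u₀) (‖v₀‖) θ₂)
      (Complex.arg v₀))
    (hk₁0 : k₁ ≠ 0)
    (φ : ℝ)
    (hφdef : φ = (-1 : ℝ) ^ κ * ((p : ℝ) - 1) * ‖v₀‖ * Real.sin Θ₃
      + ((q : ℝ) - 1) * ‖μ‖ * ‖u₀‖ * Real.sin Θ₁)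
    (hφ : φ = 0)
    (A B C D E : ℝ)
    (hA : A = deriv (deriv (fun r₁ =>
        Rhat r₁ (Complex.arg u₀) (‖v₀‖) (Complex.arg v₀))) (‖u₀‖) / k₁ ^ 2)
    (hB : B = deriv (fun θ₁ =>
        deriv (fun r₁ => Rhat r₁ θ₁ (‖v₀‖) (Complex.arg v₀)) (‖u₀‖))
        (Complex.arg u₀) / k₁)
    (hC : C = deriv (deriv (fun θ₁ =>
        Rhat (‖u₀‖) θ₁ (‖v₀‖) (Complex.arg v₀))) (Complex.arg u₀))
    (hD : D = deriv (deriv (fun r₂ =>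
        Rhat (‖u₀‖) (Complex.arg u₀) r₂ (Complex.arg v₀))) (‖v₀‖))
    (hE : E = deriv (fun θ₂ =>
        deriv (fun r₂ => Rhat (‖u₀‖) (Complex.arg u₀) r₂ θ₂) (‖v₀‖))
        (Complex.arg v₀)) :
    k₂ ^ 2 * A - 2 * k₂ * B + C
        = 4 * ((p : ℝ) - 1) * ‖μ‖ ^ 3 * ‖u₀‖ * Real.sin Θ₁
            * Real.cos Θ₂ / k₁ ^ 2 ∧
    k₃ ^ 2 * (A * C - B ^ 2) + D * (k₂ ^ 2 * A - 2 * k₂ * B + C)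
        = -(4 * ((p : ℝ) - 1) ^ 2 * ‖μ‖ ^ 2) / k₁ ^ 2 ∧
    -(k₃ * k₄) * (k₂ * A - B) ^ 2 + (k₃ * k₄ * A + E) * (k₂ ^ 2 * A - 2 * k₂ * B + C)
        = 0 :=
  identities_at_cusp_candidate_general p q μ u₀ v₀ hu₀ hv₀ hu hv Q R Rhat hQ hR Θ₁ Θ₂ Θ₃ Θ₄ hΘ₁ hΘ₂
    hΘ₃ hΘ₄ κ hκ hcos hRhat k₁ k₂ k₃ k₄ hk₁ hk₂ hk₃ hk₄ hk₁0 φ hφdef hφ A B C D E hA hB hC hD hE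
end

section
/- Let p, q ≥ 2 be integers, μ ∈ ℂ ∖ {0}, r = gcd(p−1, q−1), A = 1/p^{1/(p−1)}, B = 1/q^{1/(q−1)}, c_k = (−2·arg μ + 2πk)/(p−1) for k ∈ ℤ, and define P_k : ℝ → ℂ by P_k(θ) = μ(A^p e^{i(p(q−1)θ/r + p c_k)} + A e^{−i((q−1)θ/r + c_k)}) + B^q e^{i q(p−1)θ/r} + B e^{−i(p−1)θ/r} (the restriction of P(u,v;μ) to the singular curve C_k). Then for every θ ∈ ℝ, the derivative of P_k satisfies dP_k/dθ = −2 e^{i(p−1)(q−1)θ/(2r)} · Φ(θ), where Φ(θ) = (−1)^k |μ| ((q−1)/r) A sin((p+1)(q−1)θ/(2r) + ((p+1)/2)c_k) + ((p−1)/r) B sin((p−1)(q+1)θ/(2r)) is real valued. -/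
/-!
Write `x = (q-1)θ/r + c_k` and `y = (p-1)θ/r` for the arguments of `u` and `v` on `C_k`, so that
`P_k = μ (A^p e^{ipx} + A e^{-ix}) + (B^q e^{iqy} + B e^{-iy})`. The radii are chosen so that
`p A^p = A` and `q B^q = B`; hence each bracket `a^n e^{inx} + a e^{-ix}` has derivative
`i a x' (e^{inx} - e^{-ix}) = -2 a x' e^{i(n-1)x/2} sin((n+1)x/2)`.
Both half-angle phases `(q-1)y/2` and `(p-1)x/2 - (p-1)c_k/2` equal `(p-1)(q-1)θ/(2r)`, and
`c_k` is chosen so that `μ e^{i(p-1)c_k/2} = (-1)^k |μ|` is real.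
-/

open Complex

lemma natCast_mul_one_div_rpow_pow {n : ℕ} (hn : 2 ≤ n) :
    (n : ℝ) * (1 / (n : ℝ) ^ ((1 : ℝ) / (n - 1))) ^ n = 1 / (n : ℝ) ^ ((1 : ℝ) / (n - 1)) := by
  have hn0 : (0 : ℝ) < n := by positivity
  have hn1 : (n : ℝ) - 1 ≠ 0 := sub_ne_zero.2 (by norm_cast; omega)
  have hexp : 1 + -(1 / ((n : ℝ) - 1)) * n = -(1 / ((n : ℝ) - 1)) := by field_simp; ring
  have hne : 1 + -(1 / ((n : ℝ) - 1)) * n ≠ 0 := by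
    rw [hexp]; exact neg_ne_zero.2 (one_div_ne_zero hn1)
  rw [← Real.rpow_natCast, one_div, ← Real.rpow_neg hn0.le, ← Real.rpow_mul hn0.le,
    ← Real.rpow_one_add' hn0.le hne, hexp]

lemma cexp_add_mul_I_sub_cexp_sub_mul_I (α β : ℂ) :
    cexp ((α + β) * I) - cexp ((α - β) * I) = 2 * I * cexp (α * I) * sin β := by
  rw [sin, add_mul, sub_mul, exp_add, exp_sub, neg_mul, exp_neg]
  field_simp
  ring_nf
  rw [I_sq]; ring

lemma hasDerivAt_pow_mul_cexp_add_mul_cexp_neg {n : ℕ} {a : ℝ} (ha : n * a ^ n = a)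
    {x : ℝ → ℝ} {x' t : ℝ} (hx : HasDerivAt x x' t) :
    HasDerivAt (fun t ↦ (a : ℂ) ^ n * cexp (n * x t * I) + a * cexp (-(x t * I)))
      (-2 * a * x' * cexp ((n - 1) * x t / 2 * I) * sin ((n + 1) * x t / 2)) t := by
  have hxC := hx.ofReal_comp
  have h1 := (((hxC.const_mul (n : ℂ)).mul_const I).cexp).const_mul ((a : ℂ) ^ n)
  have h2 := ((hxC.mul_const I).fun_neg.cexp).const_mul (a : ℂ)
  refine (h1.add h2).congr_deriv ?_
  have haC : (n : ℂ) * (a : ℂ) ^ n = a := by exact_mod_cast congrArg ofReal ha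
  have key : cexp (n * x t * I) - cexp (-(x t * I))
      = 2 * I * cexp ((n - 1) * x t / 2 * I) * sin ((n + 1) * x t / 2) := by
    convert cexp_add_mul_I_sub_cexp_sub_mul_I ((n - 1) * x t / 2) ((n + 1) * x t / 2) using 3 <;> ring
  linear_combination (I * x' * cexp (n * x t * I)) * haC + (I * a * x') * key
    + (2 * a * x' * cexp ((n - 1) * x t / 2 * I) * sin ((n + 1) * x t / 2)) * I_sq

lemma mul_cexp_eq_neg_one_pow_mul {μ : ℂ} {m c : ℝ} {k : ℕ}
    (hc : m * c = 2 * Real.pi * k - 2 * arg μ) (ω : ℝ) :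
    μ * cexp ((m * c / 2 + ω : ℝ) * I) = (-1) ^ k * ‖μ‖ * cexp (ω * I) := by
  have hphase : ((m * c / 2 + ω : ℝ) : ℂ) * I = k * (Real.pi * I) + ω * I - arg μ * I := by
    rw [show m * c / 2 = Real.pi * k - arg μ by linarith]; push_cast; ring
  rw [hphase, exp_sub, exp_add, exp_nat_mul, exp_pi_mul_I]
  nth_rewrite 1 [← norm_mul_exp_arg_mul_I μ]
  field_simp

theorem derivative_of_restriction_to_singular_curve_general
    (p q : ℕ) (hp : 2 ≤ p) (hq : 2 ≤ q) (μ : ℂ)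
    (r : ℕ)
    (A B : ℝ)
    (hA : A = 1 / (p : ℝ) ^ ((1 : ℝ) / ((p : ℝ) - 1)))
    (hB : B = 1 / (q : ℝ) ^ ((1 : ℝ) / ((q : ℝ) - 1)))
    (k : ℕ)
    (ck : ℝ) (hck : ck = (-2 * Complex.arg μ + 2 * Real.pi * k) / ((p : ℝ) - 1))
    (Pk : ℝ → ℂ)
    (hPk : ∀ θ : ℝ, Pk θ =
      μ * ((A : ℂ) ^ p
            * Complex.exp (Complex.I * (((p : ℝ) * ((q : ℝ) - 1) * θ / r + p * ck : ℝ) : ℂ))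
          + (A : ℂ)
            * Complex.exp (-(Complex.I * ((((q : ℝ) - 1) * θ / r + ck : ℝ) : ℂ))))
        + (B : ℂ) ^ q
            * Complex.exp (Complex.I * (((q : ℝ) * ((p : ℝ) - 1) * θ / r : ℝ) : ℂ))
        + (B : ℂ) * Complex.exp (-(Complex.I * ((((p : ℝ) - 1) * θ / r : ℝ) : ℂ))))
    (Φ : ℝ → ℝ)
    (hΦ : ∀ θ : ℝ, Φ θ =
      (-1 : ℝ) ^ k * ‖μ‖ * (((q : ℝ) - 1) / r) * A
          * Real.sin (((p : ℝ) + 1) * ((q : ℝ) - 1) * θ / (2 * r) + ((p : ℝ) + 1) / 2 * ck)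
        + (((p : ℝ) - 1) / r) * B
          * Real.sin (((p : ℝ) - 1) * ((q : ℝ) + 1) * θ / (2 * r))) :
    ∀ θ : ℝ, deriv Pk θ =
      -2 * Complex.exp (Complex.I * ((((p : ℝ) - 1) * ((q : ℝ) - 1) * θ / (2 * r) : ℝ) : ℂ))
        * (Φ θ : ℂ) := by
  intro θ
  set x₁ : ℝ → ℝ := fun t ↦ t * (((q : ℝ) - 1) / r) + ck
  set x₂ : ℝ → ℝ := fun t ↦ t * (((p : ℝ) - 1) / r)
  set ω : ℝ := ((p : ℝ) - 1) * ((q : ℝ) - 1) * θ / (2 * r)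
  have hPk_eq : Pk = fun t ↦ μ * ((A : ℂ) ^ p * cexp (p * x₁ t * I) + A * cexp (-(x₁ t * I)))
      + ((B : ℂ) ^ q * cexp (q * x₂ t * I) + B * cexp (-(x₂ t * I))) := by
    funext t; simp only [hPk, x₁, x₂]; push_cast; ring_nf
  have hd := ((hasDerivAt_pow_mul_cexp_add_mul_cexp_neg (x := x₁)
      (hA ▸ natCast_mul_one_div_rpow_pow hp)
      ((hasDerivAt_mul_const (x := θ) _).add_const ck)).const_mul μ).fun_add
    (hasDerivAt_pow_mul_cexp_add_mul_cexp_neg (x := x₂) (hB ▸ natCast_mul_one_div_rpow_pow hq)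
      (hasDerivAt_mul_const _))
  have hu : μ * cexp ((p - 1) * x₁ θ / 2 * I) = (-1) ^ k * ‖μ‖ * cexp (I * ω) := by
    have hp1 : (p : ℝ) - 1 ≠ 0 := sub_ne_zero.2 (by norm_cast; omega)
    rw [mul_comm I, ← mul_cexp_eq_neg_one_pow_mul (μ := μ) (c := ck) (m := (p : ℝ) - 1)
      (by rw [hck]; field_simp; ring)]
    congr 3; simp only [x₁, ω]; push_cast; ring
  have hv : cexp ((q - 1) * x₂ θ / 2 * I) = cexp (I * ω) := by
    congr 1; simp only [x₂, ω]; push_cast; ring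
  have hs₁ : sin ((p + 1) * x₁ θ / 2)
      = Real.sin (((p : ℝ) + 1) * ((q : ℝ) - 1) * θ / (2 * r) + ((p : ℝ) + 1) / 2 * ck) := by
    push_cast; congr 1; simp only [x₁]; push_cast; ring
  have hs₂ : sin ((q + 1) * x₂ θ / 2) = Real.sin (((p : ℝ) - 1) * ((q : ℝ) + 1) * θ / (2 * r)) := by
    push_cast; congr 1; simp only [x₂]; push_cast; ring
  rw [hPk_eq, hd.deriv, hΦ, hv, hs₂]
  push_cast [-ofReal_sin]
  linear_combination (-2 * A * (((q : ℂ) - 1) / r) * sin ((p + 1) * x₁ θ / 2)) * hu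
    + (-2 * (-1) ^ k * ‖μ‖ * (((q : ℂ) - 1) / r) * A * cexp (I * ω)) * hs₁

/-- the derivative of the restriction `P_k` of `P(u,v;μ)` to the singular
curve `C_k` satisfies `dP_k/dθ = -2 e^{i(p-1)(q-1)θ/(2r)} Φ(θ)` with `Φ` real valued. -/
theorem derivative_of_restriction_to_singular_curve
    (p q : ℕ) (hp : 2 ≤ p) (hq : 2 ≤ q) (μ : ℂ) (hμ : μ ≠ 0)
    (r : ℕ) (hr : r = Nat.gcd (p - 1) (q - 1))
    (A B : ℝ)
    (hA : A = 1 / (p : ℝ) ^ ((1 : ℝ) / ((p : ℝ) - 1)))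
    (hB : B = 1 / (q : ℝ) ^ ((1 : ℝ) / ((q : ℝ) - 1)))
    (k : ℕ) (hk : k < r)
    (ck : ℝ) (hck : ck = (-2 * Complex.arg μ + 2 * Real.pi * k) / ((p : ℝ) - 1))
    (Pk : ℝ → ℂ)
    (hPk : ∀ θ : ℝ, Pk θ =
      μ * ((A : ℂ) ^ p
            * Complex.exp (Complex.I * (((p : ℝ) * ((q : ℝ) - 1) * θ / r + p * ck : ℝ) : ℂ))
          + (A : ℂ)
            * Complex.exp (-(Complex.I * ((((q : ℝ) - 1) * θ / r + ck : ℝ) : ℂ))))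
        + (B : ℂ) ^ q
            * Complex.exp (Complex.I * (((q : ℝ) * ((p : ℝ) - 1) * θ / r : ℝ) : ℂ))
        + (B : ℂ) * Complex.exp (-(Complex.I * ((((p : ℝ) - 1) * θ / r : ℝ) : ℂ))))
    (Φ : ℝ → ℝ)
    (hΦ : ∀ θ : ℝ, Φ θ =
      (-1 : ℝ) ^ k * ‖μ‖ * (((q : ℝ) - 1) / r) * A
          * Real.sin (((p : ℝ) + 1) * ((q : ℝ) - 1) * θ / (2 * r) + ((p : ℝ) + 1) / 2 * ck)
        + (((p : ℝ) - 1) / r) * B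
          * Real.sin (((p : ℝ) - 1) * ((q : ℝ) + 1) * θ / (2 * r))) :
    ∀ θ : ℝ, deriv Pk θ =
      -2 * Complex.exp (Complex.I * ((((p : ℝ) - 1) * ((q : ℝ) - 1) * θ / (2 * r) : ℝ) : ℂ))
        * (Φ θ : ℂ) :=
  derivative_of_restriction_to_singular_curve_general p q hp hq μ r A B hA hB k ck hck Pk hPk Φ hΦ
end

section
/- Let p ≥ 2 be an integer and set n = (p+1)/2. Let s > 0, c ∈ ℝ, and ε ∈ {1, −1}, and assume it is not the case that s = 1 and sin c = 0. Then Set.ncard {θ ∈ [0, 2π) | ε·s·sin(nθ + c) + sin(nθ) = 0} = p + 1. -/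
/-!
Harmonic addition writes `t sin (x + c) + sin x` as `R sin (x + φ)` with `R = |t e^{ic} + 1|`,
and for `t = ε s` the hypotheses say exactly that `R ≠ 0`. The zeros are then those of
`sin (nθ + φ)`: as `θ` runs over `[0, 2π)`, `nθ + φ` runs over `[φ, φ + 2nπ)`, a half-open
interval of length `(p + 1)π`, which contains exactly `p + 1` multiples of `π`.
-/

open Real

theorem ncard_setOf_intCast_mem_Ico (a : ℝ) (N : ℕ) :
    {k : ℤ | (k : ℝ) ∈ Set.Ico a (a + N)}.ncard = N := by
  have hset : {k : ℤ | (k : ℝ) ∈ Set.Ico a (a + N)} = ↑(Finset.Ico ⌈a⌉ (⌈a⌉ + N)) := by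
    ext k
    have hupper : (k : ℝ) < a + N ↔ k < ⌈a⌉ + N := by
      rw [← sub_lt_iff_lt_add, ← sub_lt_iff_lt_add, Int.lt_ceil]; push_cast; rfl
    simp [Int.ceil_le, hupper]
  rw [hset, Set.ncard_coe_finset, Int.card_Ico]
  simp

theorem ncard_setOf_sin_mul_add_eq_zero (n φ : ℝ) (N : ℕ) (hn : 0 < n) (hN : 2 * n = N) :
    {θ ∈ Set.Ico 0 (2 * π) | sin (n * θ + φ) = 0}.ncard = N := by
  set g : ℤ → ℝ := fun k => (k * π - φ) / n
  have hg : g.Injective := fun k l hkl => by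
    simpa [g, hn.ne', pi_ne_zero, sub_left_inj] using hkl
  have hscale : ∀ x : ℝ,
      x ∈ Set.Ico (φ / π) (φ / π + N) ↔ φ ≤ x * π ∧ x * π < φ + 2 * n * π := by
    intro x
    have hdiv : φ / π + N = (φ + 2 * n * π) / π := by rw [← hN]; field_simp
    rw [Set.mem_Ico, hdiv, div_le_iff₀ pi_pos, lt_div_iff₀ pi_pos]
  have hset : {θ ∈ Set.Ico 0 (2 * π) | sin (n * θ + φ) = 0} =
      g '' {k : ℤ | (k : ℝ) ∈ Set.Ico (φ / π) (φ / π + N)} := by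
    ext θ
    simp only [Set.mem_ofPred_eq, hscale, Set.mem_Ico, Set.mem_image, sin_eq_zero_iff, g]
    constructor
    · rintro ⟨⟨h0, h2π⟩, k, hk⟩
      refine ⟨k, ⟨?_, ?_⟩, ?_⟩
      · nlinarith [mul_nonneg hn.le h0]
      · nlinarith [mul_lt_mul_of_pos_left h2π hn]
      · field_simp; linarith
    · rintro ⟨k, ⟨hk1, hk2⟩, rfl⟩
      refine ⟨⟨?_, ?_⟩, k, ?_⟩
      · exact div_nonneg (by linarith) hn.le
      · rw [div_lt_iff₀ hn]; linarith
      · field_simp; ring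
  rw [hset, Set.ncard_image_of_injective _ hg]
  exact ncard_setOf_intCast_mem_Ico _ _

theorem exists_mul_sin_add_mul_cos_eq_mul_sin_add (a b : ℝ) (hab : a ≠ 0 ∨ b ≠ 0) :
    ∃ R > 0, ∃ φ : ℝ, ∀ x, a * sin x + b * cos x = R * sin (x + φ) := by
  set z : ℂ := ⟨a, b⟩
  have hz : z ≠ 0 := fun h => by
    rcases hab with ha | hb
    exacts [ha (congrArg Complex.re h), hb (congrArg Complex.im h)]
  refine ⟨‖z‖, norm_pos_iff.mpr hz, z.arg, fun x => ?_⟩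
  have hre : ‖z‖ * cos z.arg = a := Complex.norm_mul_cos_arg z
  have him : ‖z‖ * sin z.arg = b := Complex.norm_mul_sin_arg z
  rw [sin_add]
  linear_combination (-sin x) * hre + (-cos x) * him

theorem mul_cos_add_one_ne_zero_or_mul_sin_ne_zero (t c : ℝ) (h : |t| ≠ 1 ∨ sin c ≠ 0) :
    t * cos c + 1 ≠ 0 ∨ t * sin c ≠ 0 := by
  by_contra! hzero
  obtain ⟨hcos, hsin⟩ := hzero
  have ht : t ≠ 0 := by rintro rfl; simp at hcos
  have hsc : sin c = 0 := (mul_eq_zero.mp hsin).resolve_left ht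
  have habs : |t| = 1 := by
    have : (t * cos c) ^ 2 = 1 := by rw [eq_neg_of_add_eq_zero_left hcos]; norm_num
    rw [mul_pow, cos_sq', hsc] at this
    simpa [abs_eq zero_le_one] using this
  tauto

theorem number_of_zeros_equal_exponents_general
    (p : ℕ)
    (n : ℝ) (hn : n = ((p : ℝ) + 1) / 2)
    (s : ℝ) (hs : 0 < s) (c : ℝ) (ε : ℝ) (hε : ε = 1 ∨ ε = -1)
    (h : ¬ (s = 1 ∧ Real.sin c = 0)) :
    ({θ ∈ Set.Ico (0 : ℝ) (2 * Real.pi) |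
        ε * s * Real.sin (n * θ + c) + Real.sin (n * θ) = 0}).ncard = p + 1 := by
  have habs : |ε * s| = s := by rcases hε with rfl | rfl <;> simp [abs_of_pos hs]
  obtain ⟨R, hR, φ, hφ⟩ := exists_mul_sin_add_mul_cos_eq_mul_sin_add _ _
    (mul_cos_add_one_ne_zero_or_mul_sin_ne_zero (ε * s) c (by rw [habs]; tauto))
  have hzeros : ∀ θ, ε * s * sin (n * θ + c) + sin (n * θ) = 0 ↔ sin (n * θ + φ) = 0 := by
    intro θ
    have hexpand : ε * s * sin (n * θ + c) + sin (n * θ) =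
        (ε * s * cos c + 1) * sin (n * θ) + ε * s * sin c * cos (n * θ) := by
      rw [sin_add]; ring
    rw [hexpand, hφ, mul_eq_zero_iff_left hR.ne']
  simp only [hzeros]
  exact ncard_setOf_sin_mul_add_eq_zero n φ (p + 1) (by rw [hn]; positivity)
    (by rw [hn]; push_cast; ring)

/-- Lemma 4.2, case `p = q`: for `n = (p+1)/2`, `s > 0` and
not (`s = 1` and `sin c = 0`), the number of zeros of
`ε s sin(nθ + c) + sin(nθ)` in `[0, 2π)` is `p + 1`. -/
theorem number_of_zeros_equal_exponents
    (p : ℕ) (hp : 2 ≤ p)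
    (n : ℝ) (hn : n = ((p : ℝ) + 1) / 2)
    (s : ℝ) (hs : 0 < s) (c : ℝ) (ε : ℝ) (hε : ε = 1 ∨ ε = -1)
    (h : ¬ (s = 1 ∧ Real.sin c = 0)) :
    ({θ ∈ Set.Ico (0 : ℝ) (2 * Real.pi) |
        ε * s * Real.sin (n * θ + c) + Real.sin (n * θ) = 0}).ncard = p + 1 :=
  number_of_zeros_equal_exponents_general p n hn s hs c ε hε h
end

section
/- Let p > q ≥ 2 be integers, r = gcd(p−1, q−1), m = (p−1)(q+1)/(2r), n = (p+1)(q−1)/(2r), A = 1/p^{1/(p−1)}, B = 1/q^{1/(q−1)}, C₀ = ((p−1)B)/((q−1)A), c ∈ ℝ, ε ∈ {1, −1}, and T(θ, s) = ε·s·sin(nθ + c) + C₀·sin(mθ). Then there exists δ > 0 such that for every s with 0 < s < δ, Set.ncard {θ ∈ [0, 2π) | T(θ, s) = 0} = (p−1)(q+1)/r (which equals 2m, the number of zeros of sin(mθ) in [0, 2π)). -/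
/-!
Write the zero equation as `g θ + C₀ sin (m θ) = 0` with `g θ = ε s sin (n θ + c)`, which is
small together with its derivative when `s` is. Off the windows `|m θ - k π| ≤ π / 4` we have
`|C₀ sin (m θ)| ≥ C₀ √2 / 2 > |g θ|`, so there is no zero there. On a window `|cos (m θ)| ≥ √2 / 2`,
so the derivative does not vanish, and `C₀ sin (m θ)` takes the values `± C₀ √2 / 2` of opposite
signs at its ends: by the intermediate value theorem and Rolle there is exactly one zero. The
zeros in `[-π / (4 m), 2 π - π / (4 m))` are therefore those in the `2 m` windows with
`0 ≤ k < 2 m`. Finally `2 n` and `m - n = (p - q) / r` are integers, so `T (θ + 2 π) s = ± T θ s`, and the count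
on `[0, 2 π)` is the same.
-/

open Real Set

theorem ncard_Ico_setOf_eq_of_periodic {P : ℝ → Prop} {L : ℝ} (hL : 0 < L)
    (hP : Function.Periodic P L) (a b : ℝ) :
    {x ∈ Ico a (a + L) | P x}.ncard = {x ∈ Ico b (b + L) | P x}.ncard := by
  refine Set.ncard_congr (fun x _ ↦ toIcoMod hL b x) (fun x hx ↦ ⟨toIcoMod_mem_Ico hL b x, ?_⟩)
    (fun x y hx hy hxy ↦ ?_) (fun y hy ↦ ⟨toIcoMod hL a y, ⟨toIcoMod_mem_Ico hL a y, ?_⟩, ?_⟩)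
  · rw [← self_sub_toIcoDiv_zsmul, hP.sub_zsmul_eq]
    exact hx.2
  · rw [← (toIcoMod_eq_self hL).2 hx.1, ← (toIcoMod_eq_self hL).2 hy.1]
    exact (toIcoMod_inj hL).2 ((toIcoMod_inj hL).1 hxy)
  · rw [← self_sub_toIcoDiv_zsmul, hP.sub_zsmul_eq]
    exact hy.2
  · rw [toIcoMod_toIcoMod, (toIcoMod_eq_self hL).2 hy.1]

theorem existsUnique_zero_of_hasDerivAt_ne_zero {f f' : ℝ → ℝ} {a b : ℝ} (hab : a ≤ b)
    (hf : ∀ x ∈ Icc a b, HasDerivAt f (f' x) x) (hf' : ∀ x ∈ Icc a b, f' x ≠ 0)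
    (h0 : 0 ∈ uIcc (f a) (f b)) : ∃! x, x ∈ Icc a b ∧ f x = 0 := by
  have hcont : ContinuousOn f (Icc a b) := fun x hx ↦ (hf x hx).continuousAt.continuousWithinAt
  obtain ⟨x, hx, hfx⟩ := intermediate_value_uIcc (by rwa [uIcc_of_le hab]) h0
  rw [uIcc_of_le hab] at hx
  refine ⟨x, ⟨hx, hfx⟩, ?_⟩
  have no_two_zeros : ∀ y z, y ∈ Icc a b → z ∈ Icc a b → y < z → f y = f z → False := by
    intro y z hy hz hyz hfyz
    have hsub : Icc y z ⊆ Icc a b := Icc_subset_Icc hy.1 hz.2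
    obtain ⟨c, hc, hfc⟩ := exists_hasDerivAt_eq_zero hyz (hcont.mono hsub) hfyz
      fun t ht ↦ hf t (hsub (Ioo_subset_Icc_self ht))
    exact hf' c (hsub (Ioo_subset_Icc_self hc)) hfc
  rintro y ⟨hy, hfy⟩
  by_contra hne
  rcases lt_or_gt_of_ne hne with h | h
  · exact no_two_zeros y x hy hx h (hfy.trans hfx.symm)
  · exact no_two_zeros x y hx hy h (hfx.trans hfy.symm)

theorem exists_int_abs_sub_mul_pi_le_of_abs_sin_lt {x : ℝ} (h : |sin x| < √2 / 2) :
    ∃ k : ℤ, |x - k * π| ≤ π / 4 := by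
  refine ⟨round (x / π), ?_⟩
  set y := x - round (x / π) * π
  have hy : |y| ≤ π / 2 := by
    have : y = (x / π - round (x / π)) * π := by rw [sub_mul, div_mul_cancel₀ _ pi_ne_zero]
    rw [this, abs_mul, abs_of_pos pi_pos]
    nlinarith [abs_sub_round (x / π), pi_pos]
  have hsin : |sin y| = |sin x| := by
    rw [sin_sub_int_mul_pi, abs_mul, abs_neg_one_zpow, one_mul]
  by_contra! hlt
  rw [← hsin, abs_sin_eq_sin_abs_of_abs_le_pi (by linarith [pi_pos]), ← sin_pi_div_four] at h
  exact h.not_ge (sin_le_sin_of_le_of_le_pi_div_two (by linarith [pi_pos]) hy hlt.le)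

theorem sqrt_two_div_two_le_abs_cos {x : ℝ} {k : ℤ} (h : |x - k * π| ≤ π / 4) :
    √2 / 2 ≤ |cos x| := by
  calc √2 / 2 = cos (π / 4) := cos_pi_div_four.symm
    _ ≤ cos |x - k * π| :=
      cos_le_cos_of_nonneg_of_le_pi (abs_nonneg _) (by linarith [pi_pos]) h
    _ = (-1) ^ k * cos x := by rw [cos_abs, cos_sub_int_mul_pi]
    _ ≤ |(-1) ^ k * cos x| := le_abs_self _
    _ = |cos x| := by rw [abs_mul, abs_neg_one_zpow, one_mul]

theorem int_eq_of_abs_sub_mul_pi_le {x : ℝ} {i j : ℤ} (hi : |x - i * π| ≤ π / 4)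
    (hj : |x - j * π| ≤ π / 4) : i = j := by
  have : |((i - j : ℤ) : ℝ)| * π < 1 * π := by
    calc |((i - j : ℤ) : ℝ)| * π = |(x - j * π) - (x - i * π)| := by
          rw [show (x - j * π) - (x - i * π) = ((i - j : ℤ) : ℝ) * π by push_cast; ring,
            abs_mul, abs_of_pos pi_pos]
      _ ≤ π / 4 + π / 4 := (abs_sub _ _).trans (add_le_add hj hi)
      _ < 1 * π := by linarith [pi_pos]
  have := lt_of_mul_lt_mul_right this pi_pos.le
  rw [← Int.cast_abs, ← Int.cast_one, Int.cast_lt, Int.abs_lt_one_iff] at this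
  omega

theorem existsUnique_zero_add_mul_sin_near_mul_pi {C m s B : ℝ} {g g' : ℝ → ℝ} (hC : 0 < C)
    (hm : 0 < m) (hg : ∀ θ, HasDerivAt g (g' θ) θ) (hg_le : ∀ θ, |g θ| ≤ s)
    (hg'_le : ∀ θ, |g' θ| ≤ B) (hs : s < C * (√2 / 2)) (hB : B < C * m * (√2 / 2)) (k : ℤ) :
    ∃! θ, |m * θ - k * π| ≤ π / 4 ∧ g θ + C * sin (m * θ) = 0 := by
  have hwindow : ∀ θ, |m * θ - k * π| ≤ π / 4 ↔
      θ ∈ Icc ((k * π - π / 4) / m) ((k * π + π / 4) / m) := by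
    intro θ
    rw [abs_le, mem_Icc, div_le_iff₀ hm, le_div_iff₀ hm]
    constructor <;> rintro ⟨h1, h2⟩ <;> constructor <;> linarith
  simp_rw [hwindow]
  have hsin_left : sin (m * ((k * π - π / 4) / m)) = -((-1) ^ k * (√2 / 2)) := by
    rw [mul_div_cancel₀ _ hm.ne', sub_eq_neg_add, sin_add_int_mul_pi, sin_neg, sin_pi_div_four,
      mul_neg]
  have hsin_right : sin (m * ((k * π + π / 4) / m)) = (-1) ^ k * (√2 / 2) := by
    rw [mul_div_cancel₀ _ hm.ne', add_comm, sin_add_int_mul_pi, sin_pi_div_four]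
  refine existsUnique_zero_of_hasDerivAt_ne_zero
    (div_le_div_of_nonneg_right (by linarith [pi_pos]) hm.le)
    (fun θ _ ↦ (hg θ).add (((hasDerivAt_id θ).const_mul m).sin.const_mul C)) ?_ ?_
  · intro θ hθ hzero
    have hcos := sqrt_two_div_two_le_abs_cos ((hwindow θ).2 hθ)
    have : |C * (cos (m * id θ) * (m * 1))| ≤ B := by
      rw [eq_neg_of_add_eq_zero_right hzero, abs_neg]
      exact hg'_le θ
    rw [id, mul_one, abs_mul, abs_mul, abs_of_pos hC, abs_of_pos hm] at this
    nlinarith [mul_le_mul_of_nonneg_left (mul_le_mul_of_nonneg_right hcos hm.le) hC.le]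
  · have hleft := abs_le.1 (hg_le ((k * π - π / 4) / m))
    have hright := abs_le.1 (hg_le ((k * π + π / 4) / m))
    rw [hsin_left, hsin_right]
    rcases Int.even_or_odd k with hk | hk
    · rw [hk.neg_one_zpow]
      exact mem_uIcc_of_le (by linarith [hleft.2]) (by linarith [hright.1])
    · rw [hk.neg_one_zpow]
      exact mem_uIcc_of_ge (by linarith [hright.2]) (by linarith [hleft.1])

theorem ncard_zeros_add_mul_sin {C m s B : ℝ} {g g' : ℝ → ℝ} (hC : 0 < C) (hm : 0 < m)
    (hg : ∀ θ, HasDerivAt g (g' θ) θ) (hg_le : ∀ θ, |g θ| ≤ s) (hg'_le : ∀ θ, |g' θ| ≤ B)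
    (hs : s < C * (√2 / 2)) (hB : B < C * m * (√2 / 2)) (N : ℕ) :
    {θ ∈ Ico (-(π / 4) / m) ((N * π - π / 4) / m) | g θ + C * sin (m * θ) = 0}.ncard = N := by
  choose z hz hz_unique using
    existsUnique_zero_add_mul_sin_near_mul_pi hC hm hg hg_le hg'_le hs hB
  have hIco : ∀ θ, θ ∈ Ico (-(π / 4) / m) ((N * π - π / 4) / m) ↔
      -(π / 4) ≤ m * θ ∧ m * θ < N * π - π / 4 := by
    intro θ
    rw [mem_Ico, div_le_iff₀ hm, lt_div_iff₀ hm, mul_comm θ]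
  have near_mul_pi : ∀ θ, g θ + C * sin (m * θ) = 0 → ∃ k : ℤ, |m * θ - k * π| ≤ π / 4 := by
    intro θ hzero
    apply exists_int_abs_sub_mul_pi_le_of_abs_sin_lt
    have : |C * sin (m * θ)| ≤ s := by
      rw [eq_neg_of_add_eq_zero_right hzero, abs_neg]
      exact hg_le θ
    rw [abs_mul, abs_of_pos hC] at this
    exact lt_of_mul_lt_mul_left (this.trans_lt hs) hC.le
  refine Set.ncard_eq_of_bijective (fun i _ ↦ z i) ?_ (fun i hi ↦ ?_) (fun i j _ _ hij ↦ ?_)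
  · rintro θ ⟨hθ, hzero⟩
    obtain ⟨k, hk⟩ := near_mul_pi θ hzero
    rw [hIco] at hθ
    have hk_lt : (-1 : ℝ) * π < k * π ∧ (k : ℝ) * π < N * π := by
      constructor <;> linarith [abs_le.1 hk, pi_pos]
    have hk0 : (-1 : ℤ) < k := by exact_mod_cast lt_of_mul_lt_mul_right hk_lt.1 pi_pos.le
    have hkN : k < N := by exact_mod_cast lt_of_mul_lt_mul_right hk_lt.2 pi_pos.le
    lift k to ℕ using by omega
    exact ⟨k, by omega, (hz_unique k θ ⟨hk, hzero⟩).symm⟩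
  · obtain ⟨hwin, hzero⟩ := hz i
    have hi' : (i : ℝ) + 1 ≤ N := by exact_mod_cast hi
    push_cast at hwin
    refine ⟨(hIco _).2 ⟨?_, ?_⟩, hzero⟩ <;>
      nlinarith [abs_le.1 hwin, pi_pos, (Nat.cast_nonneg i : (0 : ℝ) ≤ i)]
  · exact_mod_cast int_eq_of_abs_sub_mul_pi_le (hz i).1 (hij ▸ (hz j).1)

theorem ncard_zeros_mul_sin_add_mul_sin {a n c C m : ℝ} (hC : 0 < C) (hm : 0 < m)
    (ha : |a| < C * (√2 / 2)) (han : |a| * |n| < C * m * (√2 / 2)) (N : ℕ) :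
    {θ ∈ Ico (-(π / 4) / m) ((N * π - π / 4) / m) |
      a * sin (n * θ + c) + C * sin (m * θ) = 0}.ncard = N := by
  refine ncard_zeros_add_mul_sin hC hm
    (fun θ ↦ (((hasDerivAt_id θ).const_mul n).add_const c).sin.const_mul a) (fun θ ↦ ?_)
    (fun θ ↦ ?_) ha han N
  · rw [abs_mul]
    exact mul_le_of_le_one_right (abs_nonneg a) (abs_sin_le_one _)
  · rw [id, mul_one, abs_mul, abs_mul]
    gcongr
    exact mul_le_of_le_one_left (abs_nonneg n) (abs_cos_le_one _)

theorem sin_mul_add_two_pi {ν : ℝ} {M : ℤ} (hM : 2 * ν = M) (θ c : ℝ) :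
    sin (ν * (θ + 2 * π) + c) = (-1) ^ M * sin (ν * θ + c) := by
  rw [← sin_add_int_mul_pi, ← hM]
  ring_nf

theorem periodic_mul_sin_add_mul_sin_eq_zero {n m : ℝ} {M ℓ : ℤ} (hM : 2 * n = M)
    (hℓ : m - n = ℓ) (a c C : ℝ) :
    Function.Periodic (fun θ ↦ a * sin (n * θ + c) + C * sin (m * θ) = 0) (2 * π) := by
  intro θ
  have h2m : 2 * m = ((M + 2 * ℓ : ℤ) : ℝ) := by push_cast; linarith
  have hsign : (-1 : ℝ) ^ (M + 2 * ℓ) = (-1) ^ M := by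
    rw [zpow_add₀ (by norm_num), zpow_mul]
    norm_num
  have hm := sin_mul_add_two_pi h2m θ 0
  simp only [add_zero, hsign] at hm
  simp only [sin_mul_add_two_pi hM, hm]
  rw [show a * ((-1) ^ M * sin (n * θ + c)) + C * ((-1) ^ M * sin (m * θ)) =
    (-1) ^ M * (a * sin (n * θ + c) + C * sin (m * θ)) by ring, mul_eq_zero,
    or_iff_right (zpow_ne_zero _ (by norm_num))]

theorem cast_div_gcd_sub_one {p q r : ℕ} (hq : 2 ≤ q) (hpq : q < p)
    (hr : r = Nat.gcd (p - 1) (q - 1)) :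
    (((p - 1) * (q + 1) / r : ℕ) : ℝ) = ((p : ℝ) - 1) * ((q : ℝ) + 1) / r ∧
    (((p + 1) * (q - 1) / r : ℕ) : ℝ) = ((p : ℝ) + 1) * ((q : ℝ) - 1) / r ∧
    (((p - q) / r : ℕ) : ℝ) = ((p : ℝ) - q) / r := by
  have hrp : r ∣ p - 1 := hr ▸ Nat.gcd_dvd_left _ _
  have hrq : r ∣ q - 1 := hr ▸ Nat.gcd_dvd_right _ _
  have hrpq : r ∣ p - q := by
    rw [(by omega : p - q = p - 1 - (q - 1))]
    exact Nat.dvd_sub hrp hrq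
  have hr0 : (r : ℝ) ≠ 0 := by exact_mod_cast (Nat.pos_of_dvd_of_pos hrq (by omega)).ne'
  refine ⟨?_, ?_, ?_⟩
  · rw [Nat.cast_div (hrp.mul_right _) hr0]
    push_cast [(by omega : 1 ≤ p)]
    ring
  · rw [Nat.cast_div (hrq.mul_left _) hr0]
    push_cast [(by omega : 1 ≤ q)]
    ring
  · rw [Nat.cast_div hrpq hr0]
    push_cast [hpq.le]
    ring

/-- for `p > q` and sufficiently small `s > 0`, the number of zeros of
`T(θ, s)` in `[0, 2π)` equals `(p-1)(q+1)/r`, the number of zeros of `sin(mθ)`. -/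
theorem number_of_zeros_for_small_parameter
    (p q : ℕ) (hq : 2 ≤ q) (hpq : q < p)
    (r : ℕ) (hr : r = Nat.gcd (p - 1) (q - 1))
    (m n : ℝ)
    (hm : m = ((p : ℝ) - 1) * ((q : ℝ) + 1) / (2 * r))
    (hn : n = ((p : ℝ) + 1) * ((q : ℝ) - 1) / (2 * r))
    (A B : ℝ)
    (hA : A = 1 / (p : ℝ) ^ ((1 : ℝ) / ((p : ℝ) - 1)))
    (hB : B = 1 / (q : ℝ) ^ ((1 : ℝ) / ((q : ℝ) - 1)))
    (C₀ : ℝ) (hC₀ : C₀ = ((p : ℝ) - 1) * B / (((q : ℝ) - 1) * A))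
    (c : ℝ) (ε : ℝ) (hε : ε = 1 ∨ ε = -1)
    (T : ℝ → ℝ → ℝ)
    (hT : ∀ θ s : ℝ, T θ s = ε * s * Real.sin (n * θ + c) + C₀ * Real.sin (m * θ)) :
    ∃ δ > 0, ∀ s : ℝ, 0 < s → s < δ →
      ({θ ∈ Set.Ico (0 : ℝ) (2 * Real.pi) | T θ s = 0}).ncard
        = (p - 1) * (q + 1) / r := by
  obtain ⟨hN, hM, hL⟩ := cast_div_gcd_sub_one hq hpq hr
  have hp1 : 0 < (p : ℝ) - 1 := sub_pos.2 (by exact_mod_cast (by omega : 1 < p))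
  have hq1 : 0 < (q : ℝ) - 1 := sub_pos.2 (by exact_mod_cast (by omega : 1 < q))
  have hr0 : 0 < (r : ℝ) := by exact_mod_cast hr ▸ Nat.gcd_pos_of_pos_right _ (by omega)
  have hA0 : 0 < A := hA ▸ one_div_pos.2 (rpow_pos_of_pos (by linarith) _)
  have hB0 : 0 < B := hB ▸ one_div_pos.2 (rpow_pos_of_pos (by linarith) _)
  have hC₀_pos : 0 < C₀ := hC₀ ▸ div_pos (mul_pos hp1 hB0) (mul_pos hq1 hA0)
  have hm0 : 0 < m := hm ▸ div_pos (mul_pos hp1 (by positivity)) (mul_pos two_pos hr0)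
  have hn0 : 0 < n := hn ▸ div_pos (mul_pos (by positivity) hq1) (mul_pos two_pos hr0)
  have hperiodic := periodic_mul_sin_add_mul_sin_eq_zero (n := n) (m := m)
    (M := (((p + 1) * (q - 1) / r : ℕ) : ℤ)) (ℓ := (((p - q) / r : ℕ) : ℤ))
    (by rw [Int.cast_natCast, hM, hn]; field_simp)
    (by rw [Int.cast_natCast, hL, hm, hn]; field_simp; ring)
  refine ⟨min (C₀ * (√2 / 2)) (C₀ * m * (√2 / 2) / n), by positivity, fun s hs hsδ ↦ ?_⟩
  have hεs : |ε * s| = s := by rcases hε with rfl | rfl <;> simp [hs.le]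
  simp_rw [hT]
  have hperiod_end :
      -(π / 4) / m + 2 * π = ((((p - 1) * (q + 1) / r : ℕ) : ℝ) * π - π / 4) / m := by
    rw [hN, hm]; field_simp; ring
  rw [← zero_add (2 * π), ncard_Ico_setOf_eq_of_periodic two_pi_pos (hperiodic _ _ _) 0
    (-(π / 4) / m), hperiod_end]
  refine ncard_zeros_mul_sin_add_mul_sin hC₀_pos hm0 ?_ ?_ _
  · rw [hεs]
    exact lt_of_lt_of_le hsδ (min_le_left _ _)
  · rw [hεs, abs_of_pos hn0, ← lt_div_iff₀ hn0]
    exact lt_of_lt_of_le hsδ (min_le_right _ _)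
end
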